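/- arXiv:1010.1936 — 8 statements merged into one kernel-verified Lean document; each statement's English description precedes it below -/
import Mathlib

section
/- Let H be an infinite-dimensional complex Hilbert space, let p and q be projections on H such that p − q is a compact operator, let W be an isometry with W W* = p, and let V₁, V₂ be isometries with V₁ V₁* = q and V₂ V₂* = q. Then the kernels of V₁*W, W*V₁, V₂*W and W*V₂ are all finite-dimensional, and dim ker(V₁*W) − dim ker(W*V₁) = dim ker(V₂*W) − dim ker(W*V₂). (That is, the Fredholm index Ind(V*W) defining the essential codimension of Brown–Douglas–Fillmore is independent of the choice of isometry V with V V* = q.) -/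
/-!
If `W W* = p` and `V V* = q`, the compact operator `W* (p - q) W` acts as the identity on
`ker (V* W)`, because `W* p W = 1` and `W* q W = (V* W)* (V* W)`; a closed subspace on which a
compact operator is the identity is finite dimensional (Riesz). Swapping the roles of `W` and `V`
handles `ker (W* V)`.

If `V₁ V₁* = V₂ V₂*`, then `u = V₂* V₁` is unitary, `V₂* W = u (V₁* W)` and `W* V₂ = (W* V₁) u*`.
Composing with an invertible operator on the left leaves the kernel unchanged, and on the right
moves it by an isomorphism, so both kernel dimensions agree for `V₁` and `V₂`.
-/

open ContinuousLinearMap Module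

/-- A projection on a Hilbert space: a self-adjoint idempotent bounded operator. -/
def IsProjection {H : Type*} [NormedAddCommGroup H] [InnerProductSpace ℂ H]
    [CompleteSpace H] (p : H →L[ℂ] H) : Prop :=
  IsSelfAdjoint p ∧ p * p = p

theorem Submodule.finiteDimensional_of_isCompactOperator_eqOn {𝕜 E : Type*}
    [NontriviallyNormedField 𝕜] [CompleteSpace 𝕜] [AddCommGroup E] [Module 𝕜 E]
    [UniformSpace E] [T2Space E] [IsUniformAddGroup E] [ContinuousSMul 𝕜 E]
    {K : E →ₗ[𝕜] E} (hK : IsCompactOperator K) {V : Submodule 𝕜 E}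
    (hV : IsClosed (V : Set E)) (hfix : ∀ x ∈ V, K x = x) : FiniteDimensional 𝕜 V := by
  have hmaps : ∀ x ∈ V, K x ∈ V := fun x hx ↦ (hfix x hx).symm ▸ hx
  have hid : ⇑(K.restrict hmaps) = id := funext fun x ↦ Subtype.ext (hfix x x.2)
  exact .of_isCompactOperator_id (hid ▸ hK.restrict hmaps hV)

section HilbertSpace

variable {𝕜 H : Type*} [RCLike 𝕜] [NormedAddCommGroup H] [InnerProductSpace 𝕜 H]
  [CompleteSpace H]

theorem finiteDimensional_ker_adjoint_mul {V W : H →L[𝕜] H} (hW : adjoint W * W = 1)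
    (hc : IsCompactOperator ⇑(W * adjoint W - V * adjoint V)) :
    FiniteDimensional 𝕜 (LinearMap.ker ((adjoint V * W : H →L[𝕜] H) : H →ₗ[𝕜] H)) := by
  refine Submodule.finiteDimensional_of_isCompactOperator_eqOn
    (K := ((adjoint W * (W * adjoint W - V * adjoint V) * W : H →L[𝕜] H) : H →ₗ[𝕜] H))
    ((hc.comp_clm W).clm_comp (adjoint W)) (isClosed_ker _) fun x hx ↦ ?_
  have hx : adjoint V (W x) = 0 := hx
  have hWx : adjoint W (W x) = x := by simpa using congr($hW x)
  simp [hx, hWx]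

end HilbertSpace

theorem star_mul_eq_star_mul_mul_star_mul {R : Type*} [Monoid R] [StarMul R] {v w : R}
    (hw : star w * w = 1) (hvw : v * star v = w * star w) (b : R) :
    star w * b = star w * v * (star v * b) := by
  rw [mul_assoc, ← mul_assoc v, hvw, ← mul_assoc, ← mul_assoc, hw, one_mul]

theorem star_mul_mem_unitary {R : Type*} [Monoid R] [StarMul R] {v w : R}
    (hv : star v * v = 1) (hw : star w * w = 1) (hvw : v * star v = w * star w) :
    star w * v ∈ unitary R := by
  refine Unitary.mem_iff.2 ⟨?_, ?_⟩
  · rw [star_mul, star_star, ← star_mul_eq_star_mul_mul_star_mul hv hvw.symm, hv]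
  · rw [star_mul, star_star, ← star_mul_eq_star_mul_mul_star_mul hw hvw, hw]

section Units

variable {R M : Type*} [Semiring R] [AddCommMonoid M] [Module R M] [TopologicalSpace M]

theorem ContinuousLinearMap.ker_units_mul (u : (M →L[R] M)ˣ) (T : M →L[R] M) :
    LinearMap.ker (((u : M →L[R] M) * T : M →L[R] M) : M →ₗ[R] M) =
      LinearMap.ker (T : M →ₗ[R] M) :=
  LinearEquiv.ker_comp (ContinuousLinearEquiv.unitsEquiv R M u).toLinearEquiv _

end Units

theorem ContinuousLinearMap.finrank_ker_mul_units {R M : Type*} [Ring R] [AddCommGroup M]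
    [Module R M] [TopologicalSpace M] (T : M →L[R] M) (u : (M →L[R] M)ˣ) :
    finrank R (LinearMap.ker ((T * (u : M →L[R] M) : M →L[R] M) : M →ₗ[R] M)) =
      finrank R (LinearMap.ker (T : M →ₗ[R] M)) := by
  let e := (ContinuousLinearEquiv.unitsEquiv R M u).toLinearEquiv
  have hker : LinearMap.ker ((T * (u : M →L[R] M) : M →L[R] M) : M →ₗ[R] M) =
      (LinearMap.ker (T : M →ₗ[R] M)).comap (e : M →ₗ[R] M) := LinearMap.ker_comp _ _
  rw [hker, Submodule.comap_equiv_eq_map_symm, LinearEquiv.finrank_map_eq]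

theorem essCodim_well_defined_general {H : Type*} [NormedAddCommGroup H] [InnerProductSpace ℂ H]
    [CompleteSpace H]
    (p q W V₁ V₂ : H →L[ℂ] H)
    (hpq : IsCompactOperator (⇑(p - q)))
    (hW : adjoint W * W = 1) (hWp : W * adjoint W = p)
    (hV₁ : adjoint V₁ * V₁ = 1) (hV₁q : V₁ * adjoint V₁ = q)
    (hV₂ : adjoint V₂ * V₂ = 1) (hV₂q : V₂ * adjoint V₂ = q) :
    FiniteDimensional ℂ (LinearMap.ker ((adjoint V₁ * W : H →L[ℂ] H) : H →ₗ[ℂ] H)) ∧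
    FiniteDimensional ℂ (LinearMap.ker ((adjoint W * V₁ : H →L[ℂ] H) : H →ₗ[ℂ] H)) ∧
    FiniteDimensional ℂ (LinearMap.ker ((adjoint V₂ * W : H →L[ℂ] H) : H →ₗ[ℂ] H)) ∧
    FiniteDimensional ℂ (LinearMap.ker ((adjoint W * V₂ : H →L[ℂ] H) : H →ₗ[ℂ] H)) ∧
    (finrank ℂ (LinearMap.ker ((adjoint V₁ * W : H →L[ℂ] H) : H →ₗ[ℂ] H)) : ℤ) -
      (finrank ℂ (LinearMap.ker ((adjoint W * V₁ : H →L[ℂ] H) : H →ₗ[ℂ] H)) : ℤ) =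
    (finrank ℂ (LinearMap.ker ((adjoint V₂ * W : H →L[ℂ] H) : H →ₗ[ℂ] H)) : ℤ) -
      (finrank ℂ (LinearMap.ker ((adjoint W * V₂ : H →L[ℂ] H) : H →ₗ[ℂ] H)) : ℤ) := by
  have hqp : IsCompactOperator ⇑(q - p) := by
    rw [← neg_sub]
    exact hpq.neg
  have hV₁₂ : V₁ * adjoint V₁ = V₂ * adjoint V₂ := hV₁q.trans hV₂q.symm
  let u := Unitary.toUnits ⟨_, star_mul_mem_unitary hV₁ hV₂ hV₁₂⟩
  have hleft : adjoint V₂ * W = u * (adjoint V₁ * W) := by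
    rw [← mul_assoc]; exact star_mul_eq_star_mul_mul_star_mul hV₂ hV₁₂ W
  have hright : adjoint W * V₂ = adjoint W * V₁ * ↑u⁻¹ := by
    have hu_inv : (↑u⁻¹ : H →L[ℂ] H) = star ↑u := rfl
    rw [hu_inv]
    simpa only [star_mul, ← mul_assoc, star_eq_adjoint, adjoint_adjoint] using congr(star $hleft)
  refine ⟨finiteDimensional_ker_adjoint_mul hW (by rwa [hWp, hV₁q]),
    finiteDimensional_ker_adjoint_mul hV₁ (by rwa [hWp, hV₁q]),
    finiteDimensional_ker_adjoint_mul hW (by rwa [hWp, hV₂q]),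
    finiteDimensional_ker_adjoint_mul hV₂ (by rwa [hWp, hV₂q]), ?_⟩
  rw [hleft, ker_units_mul, hright, finrank_ker_mul_units]

/-- BDF essential codimension: independence of the defining isometry.  If `p, q` are
projections with `p - q` compact, `W` is an isometry with `W W* = p`, and `V₁, V₂` are
isometries with `Vᵢ Vᵢ* = q`, then the kernels of `V₁* W`, `W* V₁`, `V₂* W`, `W* V₂` are
finite dimensional and `Ind(V₁* W) = Ind(V₂* W)`. -/
theorem essCodim_well_defined {H : Type*} [NormedAddCommGroup H] [InnerProductSpace ℂ H]
    [CompleteSpace H] (hinf : ¬ FiniteDimensional ℂ H)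
    (p q W V₁ V₂ : H →L[ℂ] H)
    (hp : IsProjection p) (hq : IsProjection q)
    (hpq : IsCompactOperator (⇑(p - q)))
    (hW : adjoint W * W = 1) (hWp : W * adjoint W = p)
    (hV₁ : adjoint V₁ * V₁ = 1) (hV₁q : V₁ * adjoint V₁ = q)
    (hV₂ : adjoint V₂ * V₂ = 1) (hV₂q : V₂ * adjoint V₂ = q) :
    FiniteDimensional ℂ (LinearMap.ker ((adjoint V₁ * W : H →L[ℂ] H) : H →ₗ[ℂ] H)) ∧
    FiniteDimensional ℂ (LinearMap.ker ((adjoint W * V₁ : H →L[ℂ] H) : H →ₗ[ℂ] H)) ∧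
    FiniteDimensional ℂ (LinearMap.ker ((adjoint V₂ * W : H →L[ℂ] H) : H →ₗ[ℂ] H)) ∧
    FiniteDimensional ℂ (LinearMap.ker ((adjoint W * V₂ : H →L[ℂ] H) : H →ₗ[ℂ] H)) ∧
    (finrank ℂ (LinearMap.ker ((adjoint V₁ * W : H →L[ℂ] H) : H →ₗ[ℂ] H)) : ℤ) -
      (finrank ℂ (LinearMap.ker ((adjoint W * V₁ : H →L[ℂ] H) : H →ₗ[ℂ] H)) : ℤ) =
    (finrank ℂ (LinearMap.ker ((adjoint V₂ * W : H →L[ℂ] H) : H →ₗ[ℂ] H)) : ℤ) -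
      (finrank ℂ (LinearMap.ker ((adjoint W * V₂ : H →L[ℂ] H) : H →ₗ[ℂ] H)) : ℤ) :=
  essCodim_well_defined_general p q W V₁ V₂ hpq hW hWp hV₁ hV₁q hV₂ hV₂q
end

section
/- Let H be an infinite-dimensional complex Hilbert space, let p and q be projections on H such that p − q is a compact operator, and let W and V be isometries with W W* = p and V V* = q. Then the kernels of V*W, W*V, p − q − 1 and p − q + 1 are all finite-dimensional and dim ker(V*W) − dim ker(W*V) = dim ker(p − q − 1) − dim ker(p − q + 1). (The essential codimension [p:q] = Ind(V*W) equals dim E₁(p−q) − dim E₋₁(p−q), where E_λ(p−q) denotes the eigenspace of p − q for the eigenvalue λ.) -/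
/-!
The isometry `W` maps `ker (V* W)` isomorphically onto `ran W ∩ ker V* = ran p ∩ ker q`, and for
projections `ran p ∩ ker q` is exactly the eigenspace of `p − q` at `1`; exchanging the roles of
`(p, W)` and `(q, V)` identifies `ker (W* V)` with `ran q ∩ ker p`, the eigenspace at `-1`. Both are
eigenspaces of the compact operator `p − q` at nonzero eigenvalues, hence finite-dimensional.
-/

open ContinuousLinearMap Module

theorem IsProjection.isStarProjection {H : Type*} [NormedAddCommGroup H] [InnerProductSpace ℂ H]
    [CompleteSpace H] {p : H →L[ℂ] H} (hp : IsProjection p) : IsStarProjection p :=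
  ⟨hp.2, hp.1⟩

namespace ContinuousLinearMap

section LeftInverse

variable {R M : Type*} [Semiring R] [TopologicalSpace M] [AddCommMonoid M] [Module R M]
  {A B : M →L[R] M}

theorem injective_of_mul_eq_one (h : B * A = 1) : Function.Injective A :=
  Function.LeftInverse.injective (g := B) fun x => congr($h x)

theorem range_mul_eq_of_mul_eq_one (h : B * A = 1) : (A * B).range = A.range := by
  have hB : Function.Surjective B := fun x => ⟨A x, congr($h x)⟩
  exact LinearMap.range_comp_of_range_eq_top (A : M →ₗ[R] M) (LinearMap.range_eq_top.2 hB)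

theorem ker_mul_eq_of_mul_eq_one (h : B * A = 1) : (A * B).ker = B.ker :=
  LinearMap.ker_comp_of_ker_eq_bot (B : M →ₗ[R] M)
    (LinearMap.ker_eq_bot_of_injective (injective_of_mul_eq_one h))

theorem map_ker_mul (A B : M →L[R] M) : (B * A).ker.map (A : M →ₗ[R] M) = A.range ⊓ B.ker :=
  Submodule.map_comap_eq (A : M →ₗ[R] M) B.ker

end LeftInverse

theorem ker_sub_smul_one_eq_eigenspace {R M : Type*} [CommRing R] [TopologicalSpace M]
    [AddCommGroup M] [Module R M] [ContinuousConstSMul R M] [IsTopologicalAddGroup M]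
    (T : M →L[R] M) (μ : R) : (T - μ • 1).ker = End.eigenspace (T : M →ₗ[R] M) μ := by
  ext x
  simp [sub_eq_zero]

section InnerProductSpace

variable {𝕜 E : Type*} [RCLike 𝕜] [NormedAddCommGroup E] [InnerProductSpace 𝕜 E] [CompleteSpace E]

theorem _root_.IsCompactOperator.finiteDimensional_ker_sub_smul_one {T : E →L[𝕜] E}
    (hT : IsCompactOperator T) {μ : 𝕜} (hμ : μ ≠ 0) : FiniteDimensional 𝕜 (T - μ • 1).ker := by
  rw [ker_sub_smul_one_eq_eigenspace]
  exact finite_dimensional_eigenspace hT μ hμ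

noncomputable def kerAdjointMulEquiv {W V : E →L[𝕜] E} (hW : adjoint W * W = 1)
    (hV : adjoint V * V = 1) :
    (adjoint V * W).ker ≃ₗ[𝕜] ↥((W * adjoint W).range ⊓ (V * adjoint V).ker) :=
  (Submodule.equivMapOfInjective (W : E →ₗ[𝕜] E) (injective_of_mul_eq_one hW) _).trans
    (LinearEquiv.ofEq _ _ (by
      rw [map_ker_mul, range_mul_eq_of_mul_eq_one hW, ker_mul_eq_of_mul_eq_one hV]))

end InnerProductSpace

end ContinuousLinearMap

namespace IsStarProjection

variable {𝕜 E : Type*} [RCLike 𝕜] [NormedAddCommGroup E] [InnerProductSpace 𝕜 E] [CompleteSpace E]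
  {p q : E →L[𝕜] E}

theorem ker_sub_sub_one_eq (hp : IsStarProjection p) (hq : IsStarProjection q) :
    (p - q - 1).ker = p.range ⊓ q.ker := by
  have hpp (x : E) : p (p x) = p x := congr($(hp.isIdempotentElem.eq) x)
  have hqq (x : E) : q (q x) = q x := congr($(hq.isIdempotentElem.eq) x)
  have hps (x y : E) : inner 𝕜 (p x) y = inner 𝕜 x (p y) := hp.isSelfAdjoint.isSymmetric x y
  have hqs (x y : E) : inner 𝕜 (q x) y = inner 𝕜 x (q y) := hq.isSelfAdjoint.isSymmetric x y
  ext x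
  simp only [LinearMap.mem_ker, Submodule.mem_inf, LinearMap.mem_range, coe_coe, sub_apply,
    one_apply_eq_self]
  constructor
  · intro h
    have hx : x = p x - q x := (sub_eq_zero.1 h).symm
    have hpqx : p (q x) = 0 := by
      have := congr(p $hx)
      rw [map_sub, hpp] at this
      exact sub_eq_self.1 this.symm
    have hqx : q x = 0 := by
      have hsq : inner 𝕜 (q x) (q x) = -inner 𝕜 (q x) (q x) := calc
        inner 𝕜 (q x) (q x) = inner 𝕜 (q x) x := by rw [← hqs, hqq]
        _ = inner 𝕜 (q x) (p x - q x) := by rw [← hx]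
        _ = -inner 𝕜 (q x) (q x) := by
          rw [inner_sub_right, ← hps, hpqx, inner_zero_left, zero_sub]
      exact inner_self_eq_zero.1 (self_eq_neg.1 hsq)
    exact ⟨⟨x, by rwa [hqx, sub_zero, eq_comm] at hx⟩, hqx⟩
  · rintro ⟨⟨y, rfl⟩, hqy⟩
    rw [hpp, hqy, sub_zero, sub_self]

theorem ker_sub_add_one_eq (hp : IsStarProjection p) (hq : IsStarProjection q) :
    (p - q + 1).ker = q.range ⊓ p.ker := by
  rw [← hq.ker_sub_sub_one_eq hp, ← LinearMap.ker_neg, ← toLinearMap_neg]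
  congr 2
  abel

end IsStarProjection

theorem essCodim_eq_eigenspace_dims_general {H : Type*} [NormedAddCommGroup H]
    [InnerProductSpace ℂ H] [CompleteSpace H]
    (p q W V : H →L[ℂ] H)
    (hp : IsProjection p) (hq : IsProjection q)
    (hpq : IsCompactOperator (⇑(p - q)))
    (hW : adjoint W * W = 1) (hWp : W * adjoint W = p)
    (hV : adjoint V * V = 1) (hVq : V * adjoint V = q) :
    FiniteDimensional ℂ (LinearMap.ker ((adjoint V * W : H →L[ℂ] H) : H →ₗ[ℂ] H)) ∧
    FiniteDimensional ℂ (LinearMap.ker ((adjoint W * V : H →L[ℂ] H) : H →ₗ[ℂ] H)) ∧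
    FiniteDimensional ℂ (LinearMap.ker ((p - q - 1 : H →L[ℂ] H) : H →ₗ[ℂ] H)) ∧
    FiniteDimensional ℂ (LinearMap.ker ((p - q + 1 : H →L[ℂ] H) : H →ₗ[ℂ] H)) ∧
    (finrank ℂ (LinearMap.ker ((adjoint V * W : H →L[ℂ] H) : H →ₗ[ℂ] H)) : ℤ) -
      (finrank ℂ (LinearMap.ker ((adjoint W * V : H →L[ℂ] H) : H →ₗ[ℂ] H)) : ℤ) =
    (finrank ℂ (LinearMap.ker ((p - q - 1 : H →L[ℂ] H) : H →ₗ[ℂ] H)) : ℤ) -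
      (finrank ℂ (LinearMap.ker ((p - q + 1 : H →L[ℂ] H) : H →ₗ[ℂ] H)) : ℤ) := by
  have hp' := hp.isStarProjection
  have hq' := hq.isStarProjection
  let e₁ : (adjoint V * W).ker ≃ₗ[ℂ] (p - q - 1).ker := (kerAdjointMulEquiv hW hV).trans
    (.ofEq _ _ (by rw [hWp, hVq, hp'.ker_sub_sub_one_eq hq']))
  let e₂ : (adjoint W * V).ker ≃ₗ[ℂ] (p - q + 1).ker := (kerAdjointMulEquiv hV hW).trans
    (.ofEq _ _ (by rw [hWp, hVq, hp'.ker_sub_add_one_eq hq']))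
  have fd₁ := hpq.finiteDimensional_ker_sub_smul_one (one_ne_zero (α := ℂ))
  have fd₂ := hpq.finiteDimensional_ker_sub_smul_one (neg_ne_zero.2 (one_ne_zero (α := ℂ)))
  rw [one_smul] at fd₁
  rw [neg_smul, one_smul, sub_neg_eq_add] at fd₂
  exact ⟨.equiv e₁.symm, .equiv e₂.symm, fd₁, fd₂, by rw [e₁.finrank_eq, e₂.finrank_eq]⟩

/-- The essential codimension `[p:q] = Ind(V* W)` equals
`dim E₁(p − q) − dim E₋₁(p − q)`. -/
theorem essCodim_eq_eigenspace_dims {H : Type*} [NormedAddCommGroup H]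
    [InnerProductSpace ℂ H] [CompleteSpace H] (hinf : ¬ FiniteDimensional ℂ H)
    (p q W V : H →L[ℂ] H)
    (hp : IsProjection p) (hq : IsProjection q)
    (hpq : IsCompactOperator (⇑(p - q)))
    (hW : adjoint W * W = 1) (hWp : W * adjoint W = p)
    (hV : adjoint V * V = 1) (hVq : V * adjoint V = q) :
    FiniteDimensional ℂ (LinearMap.ker ((adjoint V * W : H →L[ℂ] H) : H →ₗ[ℂ] H)) ∧
    FiniteDimensional ℂ (LinearMap.ker ((adjoint W * V : H →L[ℂ] H) : H →ₗ[ℂ] H)) ∧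
    FiniteDimensional ℂ (LinearMap.ker ((p - q - 1 : H →L[ℂ] H) : H →ₗ[ℂ] H)) ∧
    FiniteDimensional ℂ (LinearMap.ker ((p - q + 1 : H →L[ℂ] H) : H →ₗ[ℂ] H)) ∧
    (finrank ℂ (LinearMap.ker ((adjoint V * W : H →L[ℂ] H) : H →ₗ[ℂ] H)) : ℤ) -
      (finrank ℂ (LinearMap.ker ((adjoint W * V : H →L[ℂ] H) : H →ₗ[ℂ] H)) : ℤ) =
    (finrank ℂ (LinearMap.ker ((p - q - 1 : H →L[ℂ] H) : H →ₗ[ℂ] H)) : ℤ) -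
      (finrank ℂ (LinearMap.ker ((p - q + 1 : H →L[ℂ] H) : H →ₗ[ℂ] H)) : ℤ) :=
  essCodim_eq_eigenspace_dims_general p q W V hp hq hpq hW hWp hV hVq
end

section
/- Let p and q be projections on a complex Hilbert space H and suppose there is a unitary U ∈ B(H) with U − 1 compact and U p U* = q. Then p − q is a compact operator and the essential codimension [p:q] is 0. -/
open ContinuousLinearMap Module

/-- The essential codimension of two projections `p, q` with `p - q` compact:
`[p:q] = dim ker (p - q - 1) - dim ker (p - q + 1)`. -/
noncomputable def essCodim {H : Type*} [NormedAddCommGroup H] [InnerProductSpace ℂ H]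
    [CompleteSpace H] (p q : H →L[ℂ] H) : ℤ :=
  (finrank ℂ (LinearMap.ker ((p - q - 1 : H →L[ℂ] H) : H →ₗ[ℂ] H)) : ℤ) -
    (finrank ℂ (LinearMap.ker ((p - q + 1 : H →L[ℂ] H) : H →ₗ[ℂ] H)) : ℤ)

/-!
Put `K = p (U - 1) p`, a compact operator. Since `q = U p U*`, the space `ker (p - q - 1)` is
`ker (1 + K*)`, and `U*` maps `ker (p - q + 1)` onto `ker (1 + K)`; so `[p:q]` is the difference
of the dimensions of these two kernels, which is zero. Indeed, given an injection `j` of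
`ker (1 + K)` into `ker (1 + K*) = (range (1 + K))ᗮ`, adding the finite-rank operator
`j ∘ (orthogonal projection onto ker (1 + K))` to `1 + K` gives an injective compact perturbation
of the identity, which is surjective by the Fredholm alternative; and this forces `j` to be onto.
-/

open Function

namespace IsCompactOperator

section Banach

variable {𝕜 X : Type*} [NontriviallyNormedField 𝕜] [NormedAddCommGroup X] [NormedSpace 𝕜 X]
  [CompleteSpace X] {K : X →L[𝕜] X}

theorem surjective_one_add_of_injective (hK : IsCompactOperator K)
    (hinj : Injective ⇑(1 + K)) : Surjective ⇑(1 + K) := by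
  rcases hK.hasEigenvalue_or_mem_resolventSet (μ := -1) (by norm_num) with hev | hres
  · obtain ⟨x, hx, hx0⟩ := hev.exists_hasEigenvector
    have hKx : K x = -x := by simpa using hx
    exact absurd (hinj (by simp [hKx])) hx0
  · rw [spectrum.mem_resolventSet_iff, ContinuousLinearMap.isUnit_iff_bijective] at hres
    have : ⇑(1 + K) = -⇑(algebraMap 𝕜 (X →L[𝕜] X) (-1) - K) := by ext; simp [add_comm]
    rw [this]
    exact neg_surjective.comp hres.2

end Banach

section Hilbert

variable {𝕜 E : Type*} [RCLike 𝕜] [NormedAddCommGroup E] [InnerProductSpace 𝕜 E]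
  [CompleteSpace E] {K : E →L[𝕜] E}

theorem finiteDimensional_ker_one_add (hK : IsCompactOperator K) :
    FiniteDimensional 𝕜 (1 + K).ker := by
  have hker : (1 + K).ker = Module.End.eigenspace (K : E →ₗ[𝕜] E) (-1) := by
    ext x
    simp [add_comm x, add_eq_zero_iff_eq_neg]
  rw [hker]
  exact ContinuousLinearMap.finite_dimensional_eigenspace hK (-1) (by norm_num)

theorem surjective_of_injective_ker_to_ker_adjoint (hK : IsCompactOperator K)
    (j : (1 + K).ker →ₗ[𝕜] (adjoint (1 + K)).ker) (hj : Injective j) : Surjective j := by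
  let T : E →L[𝕜] E := 1 + K
  let N' := (adjoint T).ker
  have : FiniteDimensional 𝕜 T.ker := hK.finiteDimensional_ker_one_add
  let P := T.ker.orthogonalProjectionOnto
  let F : E →L[𝕜] E := N'.subtypeL ∘L LinearMap.toContinuousLinearMap j ∘L P
  have hF : IsCompactOperator F :=
    ((isCompactOperator_of_locallyCompactSpace_rng (LinearMap.toContinuousLinearMap j)).comp_clm
      P).clm_comp N'.subtypeL
  have hT_of_mem (x : E) (hx : T x + F x ∈ N') : T x = 0 := by
    have hTx : T x ∈ T.range ⊓ T.rangeᗮ := by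
      refine ⟨⟨x, rfl⟩, ?_⟩
      rw [T.orthogonal_range, ← add_sub_cancel_right (T x) (F x)]
      exact N'.sub_mem hx (j (P x)).2
    simpa [Submodule.inf_orthogonal_eq_bot] using hTx
  have hFx (x : E) : F x = j (P x) := rfl
  have hPx (x : E) (hx : T x = 0) : (P x : E) = x :=
    Submodule.starProjection_eq_self_iff.mpr hx
  have hTF : (1 + (K + F) : E →L[𝕜] E) = T + F := (add_assoc _ _ _).symm
  have hinj : Injective ⇑(1 + (K + F)) := by
    rw [injective_iff_map_eq_zero, hTF]
    intro x (hx : T x + F x = 0)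
    have hTx := hT_of_mem x (by rw [hx]; exact N'.zero_mem)
    have hjPx : j (P x) = 0 := by
      ext
      simpa [hTx, hFx] using hx
    rw [← hPx x hTx, (injective_iff_map_eq_zero j).mp hj _ hjPx, Submodule.coe_zero]
  intro y
  obtain ⟨x, hx⟩ := (hK.add hF).surjective_one_add_of_injective hinj y
  rw [hTF] at hx
  change T x + F x = y at hx
  have hTx := hT_of_mem x (by rw [hx]; exact y.2)
  refine ⟨P x, Subtype.ext ?_⟩
  simpa [hTx, hFx] using hx

theorem rank_ker_adjoint_le (hK : IsCompactOperator K) :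
    Module.rank 𝕜 (adjoint (1 + K)).ker ≤ Module.rank 𝕜 (1 + K).ker := by
  by_contra! hlt
  obtain ⟨j, hj⟩ := Module.Free.exists_linearMap_injective_of_rank_lt hlt
  exact hlt.ne (LinearEquiv.ofBijective j
    ⟨hj, hK.surjective_of_injective_ker_to_ker_adjoint j hj⟩).rank_eq

theorem finrank_ker_one_add_adjoint (hK : IsCompactOperator K)
    (hK' : IsCompactOperator (adjoint K)) :
    finrank 𝕜 (1 + adjoint K).ker = finrank 𝕜 (1 + K).ker := by
  have hadj (A : E →L[𝕜] E) : adjoint (1 + A) = 1 + adjoint A := by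
    rw [map_add, adjoint_one]
  have := hK.finiteDimensional_ker_one_add
  have := hK'.finiteDimensional_ker_one_add
  apply le_antisymm <;> apply finrank_le_finrank_of_rank_le_rank <;>
    simp only [Cardinal.lift_id, Module.rank_lt_aleph0]
  · have := hK.rank_ker_adjoint_le
    rwa [hadj] at this
  · have := hK'.rank_ker_adjoint_le
    rwa [hadj, adjoint_adjoint] at this

end Hilbert

end IsCompactOperator

section Compression

variable {R M : Type*} [Ring R] [AddCommGroup M] [Module R M] [TopologicalSpace M]
  [IsTopologicalAddGroup M] {p : M →L[R] M}

theorem IsIdempotentElem.one_add_mul_sub_one_mul_apply_eq_zero_iff (hp : IsIdempotentElem p)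
    (W : M →L[R] M) (x : M) : (1 + p * (W - 1) * p) x = 0 ↔ p x = x ∧ p (W x) = 0 := by
  have hpp (y : M) : p (p y) = p y := congr($hp y)
  have happ : (1 + p * (W - 1) * p) x = x - p x + p (W (p x)) := by
    simp only [add_apply, one_apply_eq_self, mul_apply_eq_comp, sub_apply, map_sub, hpp]
    abel
  rw [happ]
  constructor
  · intro h
    have hpW : p (W (p x)) = 0 := by simpa [hpp] using congr(p $h)
    have hpx : p x = x := by rw [hpW, add_zero, sub_eq_zero] at h; exact h.symm
    exact ⟨hpx, hpx ▸ hpW⟩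
  · rintro ⟨hpx, hpW⟩
    rw [hpx, hpW, sub_self, add_zero]

end Compression

namespace IsProjection

variable {H : Type*} [NormedAddCommGroup H] [InnerProductSpace ℂ H] [CompleteSpace H]
  {p q : H →L[ℂ] H}

theorem apply_apply (hp : IsProjection p) (x : H) : p (p x) = p x := congr($(hp.2) x)

theorem inner_apply_left (hp : IsProjection p) (x y : H) :
    inner ℂ (p x) y = inner ℂ x (p y) :=
  hp.1.isSymmetric x y

theorem eq_self_and_eq_zero_of_sub_apply_eq_self (hp : IsProjection p) (hq : IsProjection q)
    {x : H} (h : p x - q x = x) : p x = x ∧ q x = 0 := by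
  have hpq : p (q x) = 0 := by
    simpa [hp.apply_apply] using congr(p $h)
  have hqq : inner ℂ (q x) (q x) = -inner ℂ (q x) (q x) :=
    calc inner ℂ (q x) (q x) = inner ℂ (q x) x := by rw [← hq.inner_apply_left, hq.apply_apply]
      _ = inner ℂ (q x) (p x) - inner ℂ (q x) (q x) := by rw [← inner_sub_right, h]
      _ = -inner ℂ (q x) (q x) := by rw [← hp.inner_apply_left, hpq, inner_zero_left, zero_sub]
  have hqx : q x = 0 := inner_self_eq_zero.mp (self_eq_neg.mp hqq)
  exact ⟨by simpa [hqx] using h, hqx⟩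

theorem sub_sub_one_apply_eq_zero_iff (hp : IsProjection p) (hq : IsProjection q) (x : H) :
    (p - q - 1) x = 0 ↔ p x = x ∧ q x = 0 := by
  refine ⟨fun h => hp.eq_self_and_eq_zero_of_sub_apply_eq_self hq ?_, fun ⟨hpx, hqx⟩ => ?_⟩
  · simpa [sub_eq_zero] using h
  · simp [hpx, hqx]

theorem sub_add_one_apply_eq_zero_iff (hp : IsProjection p) (hq : IsProjection q) (x : H) :
    (p - q + 1) x = 0 ↔ q x = x ∧ p x = 0 := by
  have h : (p - q + 1) x = -((q - p - 1) x) := by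
    rw [show p - q + 1 = -(q - p - 1) by abel]
    rfl
  rw [h, neg_eq_zero, hq.sub_sub_one_apply_eq_zero_iff hp]

end IsProjection

section UnitaryConjugation

variable {H : Type*} [NormedAddCommGroup H] [InnerProductSpace ℂ H] [CompleteSpace H]
  {p q U : H →L[ℂ] H}

theorem ker_sub_sub_one_eq_of_conj (hp : IsProjection p) (hq : IsProjection q)
    (hU₁ : adjoint U * U = 1) (hconj : U * p * adjoint U = q) :
    (p - q - 1).ker = (1 + p * (adjoint U - 1) * p).ker := by
  have hU : Injective U := LeftInverse.injective (g := adjoint U) fun x => congr($hU₁ x)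
  ext x
  rw [LinearMap.mem_ker, LinearMap.mem_ker, ContinuousLinearMap.coe_coe,
    ContinuousLinearMap.coe_coe, hp.sub_sub_one_apply_eq_zero_iff hq,
    IsIdempotentElem.one_add_mul_sub_one_mul_apply_eq_zero_iff hp.2, ← hconj]
  exact and_congr_right fun _ => map_eq_zero_iff U hU

theorem finrank_ker_sub_add_one_eq_of_conj (hp : IsProjection p) (hq : IsProjection q)
    (hU₁ : adjoint U * U = 1) (hU₂ : U * adjoint U = 1) (hconj : U * p * adjoint U = q) :
    finrank ℂ (p - q + 1).ker = finrank ℂ (1 + p * (U - 1) * p).ker := by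
  let e := ContinuousLinearEquiv.unitsEquiv ℂ H ⟨adjoint U, U, hU₁, hU₂⟩
  have hU : Injective U := LeftInverse.injective (g := adjoint U) fun x => congr($hU₁ x)
  have hUU (x : H) : U (adjoint U x) = x := congr($hU₂ x)
  have hker : (p - q + 1).ker = (1 + p * (U - 1) * p).ker.comap e.toLinearEquiv.toLinearMap := by
    ext x
    rw [Submodule.mem_comap, LinearMap.mem_ker, LinearMap.mem_ker, ContinuousLinearMap.coe_coe,
      ContinuousLinearMap.coe_coe, hp.sub_add_one_apply_eq_zero_iff hq,
      IsIdempotentElem.one_add_mul_sub_one_mul_apply_eq_zero_iff hp.2]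
    change _ ↔ p (adjoint U x) = adjoint U x ∧ p (U (adjoint U x)) = 0
    have hqx : q x = x ↔ p (adjoint U x) = adjoint U x :=
      calc q x = x ↔ U (p (adjoint U x)) = U (adjoint U x) := by rw [← hconj, hUU]; rfl
        _ ↔ _ := hU.eq_iff
    rw [hUU, hqx]
  rw [hker, Submodule.comap_equiv_eq_map_symm, LinearEquiv.finrank_map_eq]

end UnitaryConjugation

/-- If `U` is a unitary with `U - 1` compact and `U p U* = q`, then `p - q` is compact
and the essential codimension `[p:q]` is `0`. -/
theorem essCodim_eq_zero_of_unitary {H : Type*} [NormedAddCommGroup H]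
    [InnerProductSpace ℂ H] [CompleteSpace H] (p q U : H →L[ℂ] H)
    (hp : IsProjection p) (hq : IsProjection q)
    (hU₁ : adjoint U * U = 1) (hU₂ : U * adjoint U = 1)
    (hUK : IsCompactOperator (⇑(U - 1)))
    (hconj : U * p * adjoint U = q) :
    IsCompactOperator (⇑(p - q)) ∧ essCodim p q = 0 := by
  have hUK' : IsCompactOperator ⇑(adjoint U - 1) := by
    have h : adjoint U - 1 = -(adjoint U * (U - 1)) := by rw [mul_sub, hU₁, mul_one]; abel
    rw [h]
    exact (hUK.clm_comp (adjoint U)).neg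
  have hpq : p - q = -((U - 1) * p * adjoint U + p * (adjoint U - 1)) := by
    rw [← hconj]; noncomm_ring
  have hK : IsCompactOperator ⇑(p * (U - 1) * p) := (hUK.comp_clm p).clm_comp p
  have hadjK : adjoint (p * (U - 1) * p) = p * (adjoint U - 1) * p := by
    simp only [← star_eq_adjoint, star_mul, star_sub, star_one, hp.1.star_eq, mul_assoc]
  have hK' : IsCompactOperator ⇑(adjoint (p * (U - 1) * p)) := by
    rw [hadjK]
    exact (hUK'.comp_clm p).clm_comp p
  refine ⟨?_, ?_⟩
  · rw [hpq]
    exact (((hUK.comp_clm p).comp_clm (adjoint U)).add (hUK'.clm_comp p)).neg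
  · rw [essCodim, ker_sub_sub_one_eq_of_conj hp hq hU₁ hconj,
      finrank_ker_sub_add_one_eq_of_conj hp hq hU₁ hU₂ hconj, ← hadjK,
      hK.finrank_ker_one_add_adjoint hK', sub_self]
end

section
/- Let p and q be projections on a complex Hilbert space H such that p − q is a compact operator and ‖p − q‖ < 1. Then there exists a unitary U ∈ B(H) with U − 1 compact such that U p U* = q; in particular the essential codimension [p:q] is 0. (A concrete U is obtained from the polar decomposition of a = (1−q)(1−p) + q p, which is invertible and satisfies a p = q a.) -/
open ContinuousLinearMap Module

/-!
The element `a = q p + (1 - q)(1 - p)` intertwines the two projections, `a p = q a`, and is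
normal with `a* a = a a* = 1 - (p - q)²`. When `‖p - q‖ < 1` this is invertible, and the unitary
factor `U = a (a* a)^(-1/2)` of the polar decomposition of `a` still intertwines them:
`U p U* = q`. Both `a - 1 = q (p - q) - (p - q) p` and `(a* a)^(-1/2) - 1` lie in the ideal
generated by `p - q`, so `U - 1` is compact. Finally `‖p - q‖ < 1` rules out the eigenvalues `±1`
of `p - q`, so both kernels in `[p:q]` vanish.
-/

namespace ContinuousLinearMap

variable {𝕜 E : Type*} [NontriviallyNormedField 𝕜] [NormedAddCommGroup E] [NormedSpace 𝕜 E]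
  {T : E →L[𝕜] E}

theorem eq_zero_of_norm_apply_eq (hT : ‖T‖ < 1) {x : E} (hx : ‖T x‖ = ‖x‖) : x = 0 := by
  by_contra hx0
  have hpos : 0 < ‖x‖ := norm_pos_iff.mpr hx0
  have : ‖x‖ ≤ ‖T‖ * ‖x‖ := hx ▸ T.le_opNorm x
  nlinarith

theorem ker_sub_one_eq_bot_of_norm_lt_one (hT : ‖T‖ < 1) :
    LinearMap.ker ((T - 1 : E →L[𝕜] E) : E →ₗ[𝕜] E) = ⊥ := by
  refine (Submodule.eq_bot_iff _).mpr fun x hx ↦ eq_zero_of_norm_apply_eq hT ?_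
  have : T x - x = 0 := by simpa using hx
  rw [sub_eq_zero.mp this]

theorem ker_add_one_eq_bot_of_norm_lt_one (hT : ‖T‖ < 1) :
    LinearMap.ker ((T + 1 : E →L[𝕜] E) : E →ₗ[𝕜] E) = ⊥ := by
  refine (Submodule.eq_bot_iff _).mpr fun x hx ↦ eq_zero_of_norm_apply_eq hT ?_
  have : T x + x = 0 := by simpa using hx
  rw [eq_neg_of_add_eq_zero_left this, norm_neg]

end ContinuousLinearMap

theorem essCodim_eq_zero_of_norm_sub_lt_one {H : Type*} [NormedAddCommGroup H]
    [InnerProductSpace ℂ H] [CompleteSpace H] {p q : H →L[ℂ] H} (h : ‖p - q‖ < 1) :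
    essCodim p q = 0 := by
  rw [essCodim, ker_sub_one_eq_bot_of_norm_lt_one h, ker_add_one_eq_bot_of_norm_lt_one h]
  simp

theorem isProjection_iff_isStarProjection {H : Type*} [NormedAddCommGroup H]
    [InnerProductSpace ℂ H] [CompleteSpace H] {p : H →L[ℂ] H} :
    IsProjection p ↔ IsStarProjection p := by
  rw [IsProjection, isStarProjection_iff, IsIdempotentElem, and_comm]

section Intertwiner

variable {R : Type*} [Ring R]

def intertwiner (p q : R) : R := q * p + (1 - q) * (1 - p)

variable {p q : R}

theorem intertwiner_mul_eq_mul_intertwiner (hp : IsIdempotentElem p) (hq : IsIdempotentElem q) :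
    intertwiner p q * p = q * intertwiner p q := by
  rw [intertwiner]
  noncomm_ring
  simp only [hp.eq, hq.eq, hq.mul_self_mul]
  abel

theorem intertwiner_mul_intertwiner (hp : IsIdempotentElem p) (hq : IsIdempotentElem q) :
    intertwiner p q * intertwiner q p = 1 - (p - q) ^ 2 := by
  rw [intertwiner, intertwiner]
  noncomm_ring
  simp only [hp.eq, hq.eq, hp.mul_self_mul]
  abel

theorem intertwiner_sub_one (hp : IsIdempotentElem p) (hq : IsIdempotentElem q) :
    intertwiner p q - 1 = q * (p - q) - (p - q) * p := by
  rw [intertwiner]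
  noncomm_ring
  rw [hp.eq, hq.eq]

variable [StarRing R] (hp : IsStarProjection p) (hq : IsStarProjection q)
include hp hq

theorem star_intertwiner : star (intertwiner p q) = intertwiner q p := by
  simp only [intertwiner, star_add, star_mul, star_sub, star_one, hp.isSelfAdjoint.star_eq,
    hq.isSelfAdjoint.star_eq]

theorem star_intertwiner_mul_self :
    star (intertwiner p q) * intertwiner p q = 1 - (p - q) ^ 2 := by
  rw [star_intertwiner hp hq, intertwiner_mul_intertwiner hq.isIdempotentElem hp.isIdempotentElem,
    ← neg_sub p q, neg_sq]

theorem isStarNormal_intertwiner : IsStarNormal (intertwiner p q) where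
  star_comm_self := by
    rw [commute_iff_eq, star_intertwiner_mul_self hp hq, star_intertwiner hp hq,
      intertwiner_mul_intertwiner hp.isIdempotentElem hq.isIdempotentElem]

end Intertwiner

theorem spectrum_one_sub_subset_Ioi {A : Type*} [NormedRing A] [NormedAlgebra ℝ A]
    [CompleteSpace A] (h1 : ‖(1 : A)‖ ≤ 1) {x : A} (hx : ‖x‖ < 1) :
    spectrum ℝ (1 - x) ⊆ Set.Ioi 0 := by
  intro r hr
  rw [← map_one (algebraMap ℝ A), ← spectrum.singleton_sub_eq] at hr
  obtain ⟨_, rfl, s, hs, rfl⟩ := hr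
  have : |s| < 1 := calc
    |s| ≤ ‖x‖ * ‖(1 : A)‖ := spectrum.norm_le_norm_mul_of_mem hs
    _ ≤ ‖x‖ := mul_le_of_le_one_right (norm_nonneg x) h1
    _ < 1 := hx
  simp only [Set.mem_Ioi, sub_pos]
  exact (abs_lt.mp this).2

theorem continuousOn_inv_sqrt {s : Set ℝ} (hs : s ⊆ Set.Ioi 0) :
    ContinuousOn (fun x : ℝ ↦ (√x)⁻¹) s :=
  Real.continuous_sqrt.continuousOn.inv₀ fun _ hx ↦ (Real.sqrt_pos.mpr (hs hx)).ne'

theorem commute_star_mul_self_of_mul_eq {R : Type*} [Ring R] [StarRing R] {a p q : R}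
    (hp : IsSelfAdjoint p) (hq : IsSelfAdjoint q) (h : a * p = q * a) :
    Commute p (star a * a) := by
  have h' : p * star a = star a * q := by
    simpa only [star_mul, hp.star_eq, hq.star_eq] using congrArg star h
  calc p * (star a * a) = star a * (q * a) := by rw [← mul_assoc, h', mul_assoc]
    _ = star a * a * p := by rw [← h, mul_assoc]

section InvSqrt

variable {A : Type*} [Ring A] [StarRing A] [Algebra ℝ A] [TopologicalSpace A]
  [ContinuousFunctionalCalculus ℝ A IsSelfAdjoint] {c : A}

theorem cfc_inv_sqrt_mul_self_mul (hspec : spectrum ℝ c ⊆ Set.Ioi 0)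
    (hc : IsSelfAdjoint c := by cfc_tac) :
    cfc (fun x : ℝ ↦ (√x)⁻¹) c * c * cfc (fun x : ℝ ↦ (√x)⁻¹) c = 1 := by
  have hf := continuousOn_inv_sqrt hspec
  calc _ = cfc (fun x : ℝ ↦ (√x)⁻¹ * x * (√x)⁻¹) c := by
        rw [cfc_mul (fun x : ℝ ↦ (√x)⁻¹ * x) _ c (hf.mul continuousOn_id) hf,
          cfc_mul (fun x : ℝ ↦ (√x)⁻¹) (fun x ↦ x) c hf continuousOn_id, cfc_id' ℝ c]
    _ = cfc (fun _ : ℝ ↦ (1 : ℝ)) c := cfc_congr fun x hx ↦ by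
        have := Real.sqrt_pos.mpr (hspec hx)
        field_simp
        exact (Real.sq_sqrt (hspec hx).le).symm
    _ = 1 := cfc_const_one ℝ c

theorem cfc_inv_sqrt_sub_one (hspec : spectrum ℝ c ⊆ Set.Ioi 0)
    (hc : IsSelfAdjoint c := by cfc_tac) :
    cfc (fun x : ℝ ↦ (√x)⁻¹) c - 1 =
      cfc (fun x : ℝ ↦ (√x * (√x + 1))⁻¹) c * (1 - c) := by
  have hg : ContinuousOn (fun x : ℝ ↦ (√x * (√x + 1))⁻¹) (spectrum ℝ c) :=
    (Real.continuous_sqrt.continuousOn.mul (by fun_prop)).inv₀ fun x hx ↦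
      (mul_pos (Real.sqrt_pos.mpr (hspec hx)) (by positivity)).ne'
  calc _ = cfc (fun x : ℝ ↦ (√x)⁻¹ - 1) c := by
        rw [cfc_sub _ _ c (continuousOn_inv_sqrt hspec), cfc_const_one ℝ c]
    _ = cfc (fun x : ℝ ↦ (√x * (√x + 1))⁻¹ * (1 - x)) c := cfc_congr fun x hx ↦ by
        have := Real.sqrt_pos.mpr (hspec hx)
        field_simp
        nlinarith [Real.sq_sqrt (hspec hx).le]
    _ = _ := by rw [cfc_mul _ _ c hg, cfc_sub _ _ c, cfc_const_one ℝ c, cfc_id' ℝ c]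

end InvSqrt

section Polar

variable {A : Type*} [Ring A] [StarRing A] [Algebra ℝ A] [TopologicalSpace A]
  [ContinuousFunctionalCalculus ℝ A IsSelfAdjoint] [IsTopologicalRing A] [T2Space A]

/-- For invertible `a` this is the unitary factor `a |a|⁻¹` of the polar decomposition of `a`. -/
noncomputable def polarUnitary (a : A) : A := a * cfc (fun x : ℝ ↦ (√x)⁻¹) (star a * a)

variable {a : A} [IsStarNormal a] (hspec : spectrum ℝ (star a * a) ⊆ Set.Ioi 0)
include hspec

theorem polarUnitary_mem_unitary : polarUnitary a ∈ unitary A := by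
  set b := cfc (fun x : ℝ ↦ (√x)⁻¹) (star a * a)
  have hb : IsSelfAdjoint b := cfc_predicate _ _
  have hbcb : b * (star a * a) * b = 1 := cfc_inv_sqrt_mul_self_mul hspec
  have hab : Commute a b := by
    refine (Commute.cfc_real ?_ _).symm
    calc star a * a * a = a * star a * a := by rw [star_comm_self' a]
      _ = a * (star a * a) := mul_assoc _ _ _
  have hab' : Commute (star a) b := by
    simpa only [star_star, hb.star_eq] using hab.star_star
  have hstar : star (polarUnitary a) = b * star a := by
    rw [polarUnitary, star_mul, hb.star_eq]
  refine Unitary.mem_iff.mpr ⟨?_, ?_⟩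
  · rw [hstar, polarUnitary]
    simpa only [mul_assoc] using hbcb
  · rw [hstar, polarUnitary]
    calc a * b * (b * star a) = b * (a * star a) * b := by
          rw [hab.eq, ← hab'.eq]
          simp only [mul_assoc]
      _ = 1 := by rw [← star_comm_self' a, hbcb]

theorem polarUnitary_mul_mul_star {p q : A} (hp : IsSelfAdjoint p) (hq : IsSelfAdjoint q)
    (h : a * p = q * a) : polarUnitary a * p * star (polarUnitary a) = q := by
  have hpb : Commute p (cfc (fun x : ℝ ↦ (√x)⁻¹) (star a * a)) :=
    ((commute_star_mul_self_of_mul_eq hp hq h).symm.cfc_real _).symm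
  calc polarUnitary a * p * star (polarUnitary a)
      = q * (polarUnitary a * star (polarUnitary a)) := by
        rw [polarUnitary, mul_assoc a, ← hpb.eq, ← mul_assoc, h, mul_assoc q, mul_assoc q]
    _ = q := by rw [Unitary.mul_star_self_of_mem (polarUnitary_mem_unitary hspec), mul_one]

end Polar

namespace IsCompactOperator

variable {𝕜 E : Type*} [NontriviallyNormedField 𝕜] [NormedAddCommGroup E] [NormedSpace 𝕜 E]
  {T : E →L[𝕜] E}

theorem clm_mul (hT : IsCompactOperator T) (S : E →L[𝕜] E) : IsCompactOperator ⇑(S * T) :=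
  hT.clm_comp S

theorem mul_clm (hT : IsCompactOperator T) (S : E →L[𝕜] E) : IsCompactOperator ⇑(T * S) :=
  hT.comp_clm S

end IsCompactOperator

theorem isCompactOperator_polarUnitary_sub_one {H : Type*} [NormedAddCommGroup H]
    [InnerProductSpace ℂ H] [CompleteSpace H] {a : H →L[ℂ] H}
    (hspec : spectrum ℝ (star a * a) ⊆ Set.Ioi 0) (ha : IsCompactOperator ⇑(a - 1))
    (hc : IsCompactOperator ⇑(1 - star a * a)) : IsCompactOperator ⇑(polarUnitary a - 1) := by
  set b := cfc (fun x : ℝ ↦ (√x)⁻¹) (star a * a)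
  have hb : IsCompactOperator ⇑(b - 1) := by
    rw [cfc_inv_sqrt_sub_one hspec]
    exact hc.clm_mul _
  have hU : polarUnitary a - 1 = (a - 1) * b + (b - 1) := by
    rw [polarUnitary]
    noncomm_ring
  rw [hU]
  exact (ha.mul_clm b).add hb

/-- If `p, q` are projections with `p - q` compact and `‖p - q‖ < 1`, then there is a
unitary `U` with `U - 1` compact such that `U p U* = q`; in particular `[p:q] = 0`. -/
theorem exists_unitary_of_norm_lt_one {H : Type*} [NormedAddCommGroup H]
    [InnerProductSpace ℂ H] [CompleteSpace H] (p q : H →L[ℂ] H)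
    (hp : IsProjection p) (hq : IsProjection q)
    (hpq : IsCompactOperator (⇑(p - q)))
    (hnorm : ‖p - q‖ < 1) :
    (∃ U : H →L[ℂ] H, adjoint U * U = 1 ∧ U * adjoint U = 1 ∧
      IsCompactOperator (⇑(U - 1)) ∧ U * p * adjoint U = q) ∧
    essCodim p q = 0 := by
  rw [isProjection_iff_isStarProjection] at hp hq
  have hnormal := isStarNormal_intertwiner hp hq
  have hspec : spectrum ℝ (star (intertwiner p q) * intertwiner p q) ⊆ Set.Ioi 0 := by
    rw [star_intertwiner_mul_self hp hq]
    refine spectrum_one_sub_subset_Ioi norm_id_le ?_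
    calc ‖(p - q) ^ 2‖ ≤ ‖p - q‖ ^ 2 := norm_pow_le' _ two_pos
      _ < 1 := pow_lt_one₀ (norm_nonneg _) hnorm two_ne_zero
  have hU := polarUnitary_mem_unitary hspec
  refine ⟨⟨polarUnitary (intertwiner p q), ?_, ?_, ?_, ?_⟩,
    essCodim_eq_zero_of_norm_sub_lt_one hnorm⟩
  · rw [← star_eq_adjoint, Unitary.star_mul_self_of_mem hU]
  · rw [← star_eq_adjoint, Unitary.mul_star_self_of_mem hU]
  · refine isCompactOperator_polarUnitary_sub_one hspec ?_ ?_
    · rw [intertwiner_sub_one hp.isIdempotentElem hq.isIdempotentElem]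
      exact (hpq.clm_mul q).sub (hpq.mul_clm p)
    · rw [star_intertwiner_mul_self hp hq, sub_sub_cancel, sq]
      exact hpq.mul_clm _
  · rw [← star_eq_adjoint]
    exact polarUnitary_mul_mul_star hspec hp.isSelfAdjoint hq.isSelfAdjoint
      (intertwiner_mul_eq_mul_intertwiner hp.isIdempotentElem hq.isIdempotentElem)
end

section
/- (Calkin) Let T be a self-adjoint bounded operator on a complex Hilbert space H with ‖T‖ ≤ 1 such that T − T² is a compact operator. Then there exists a projection P on H such that P − T is a compact operator. -/
open ContinuousLinearMap Module

section CalkinAux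

open Filter Topology

section Calkin

variable {H : Type*} [NormedAddCommGroup H] [InnerProductSpace ℂ H] [CompleteSpace H]

/-- Approximate eigenvectors for real spectral values of a self-adjoint operator. -/
lemma calkin_approx (T : H →L[ℂ] H) (hT : IsSelfAdjoint T) {μ : ℝ}
    (hμ : μ ∈ spectrum ℝ T) {ε : ℝ} (hε : 0 < ε) :
    ∃ x : H, ‖x‖ = 1 ∧ ‖T x - μ • x‖ < ε := by
  set δ := ε / 4 with hδdef
  have hδ : 0 < δ := by positivity
  set f : ℝ → ℝ := fun t => max 0 (1 - |t - μ| / δ) with hfdef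
  have hfc : Continuous f := by
    apply continuous_const.max
    exact continuous_const.sub ((continuous_id.sub continuous_const).abs.div_const δ)
  have hf1 : f μ = 1 := by simp [hfdef]
  set A := cfc f T with hA
  have hA1 : (1 : ℝ) ≤ ‖A‖ := by
    have := norm_apply_le_norm_cfc f T hμ hfc.continuousOn hT
    rwa [hf1, norm_one] at this
  have hgb : ∀ t : ℝ, |(t - μ) * f t| ≤ δ := by
    intro t
    rcases le_or_gt |t - μ| δ with h | h
    · have hf0 : 0 ≤ f t := le_max_left _ _
      have hf1' : f t ≤ 1 := by
        apply max_le (by norm_num)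
        have : 0 ≤ |t - μ| / δ := by positivity
        linarith
      rw [abs_mul]
      calc |t - μ| * |f t| ≤ δ * 1 := by
            apply mul_le_mul h _ (abs_nonneg _) hδ.le
            rw [abs_of_nonneg hf0]; exact hf1'
        _ = δ := mul_one δ
    · have : f t = 0 := by
        apply max_eq_left
        have : 1 < |t - μ| / δ := (one_lt_div hδ).mpr h
        linarith
      simp [this, hδ.le]
  have hmul : cfc (fun t : ℝ => (t - μ) * f t) T
      = (T - algebraMap ℝ (H →L[ℂ] H) μ) * A := by
    rw [cfc_mul (fun t : ℝ => t - μ) f T (by fun_prop) hfc.continuousOn,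
      cfc_sub (fun t : ℝ => t) (fun _ : ℝ => μ) T (by fun_prop) (by fun_prop),
      cfc_id' ℝ T, cfc_const μ T]
  have hmn : ‖(T - algebraMap ℝ (H →L[ℂ] H) μ) * A‖ ≤ δ := by
    rw [← hmul]
    refine norm_cfc_le hδ.le (fun x _ => ?_)
    rw [Real.norm_eq_abs]; exact hgb x
  obtain ⟨y, hy1, hy2⟩ := ContinuousLinearMap.exists_lt_apply_of_lt_opNorm A
    (r := 1/2) (by linarith)
  have hAy : A y ≠ 0 := by
    intro h
    rw [h, norm_zero] at hy2
    norm_num at hy2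
  refine ⟨‖A y‖⁻¹ • A y, ?_, ?_⟩
  · rw [norm_smul, norm_inv, norm_norm, inv_mul_cancel₀ (norm_ne_zero_iff.mpr hAy)]
  · have halg : ∀ v : H, (algebraMap ℝ (H →L[ℂ] H) μ) v = μ • v := by
      intro v
      rw [Algebra.algebraMap_eq_smul_one]
      simp
    have hsub : ∀ v : H, T v - μ • v = (T - algebraMap ℝ (H →L[ℂ] H) μ) v := by
      intro v; rw [ContinuousLinearMap.sub_apply, halg]
    have hTsmul : T (‖A y‖⁻¹ • A y) = ‖A y‖⁻¹ • T (A y) :=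
      T.map_smul_of_tower _ _
    rw [hTsmul, smul_comm μ ‖A y‖⁻¹ (A y), ← smul_sub, norm_smul, norm_inv, norm_norm, hsub]
    have hb : ‖(T - algebraMap ℝ (H →L[ℂ] H) μ) (A y)‖ ≤ δ := by
      calc ‖(T - algebraMap ℝ (H →L[ℂ] H) μ) (A y)‖
          = ‖((T - algebraMap ℝ (H →L[ℂ] H) μ) * A) y‖ := by
            rw [ContinuousLinearMap.mul_apply]
        _ ≤ ‖(T - algebraMap ℝ (H →L[ℂ] H) μ) * A‖ * ‖y‖ :=
            ContinuousLinearMap.le_opNorm _ _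
        _ ≤ δ * 1 := by
            apply mul_le_mul hmn hy1.le (norm_nonneg _) hδ.le
        _ = δ := mul_one δ
    have h2 : ‖A y‖⁻¹ ≤ 2 := by
      rw [inv_le_comm₀ (by linarith) (by norm_num)]
      linarith
    calc ‖A y‖⁻¹ * ‖(T - algebraMap ℝ (H →L[ℂ] H) μ) (A y)‖
        ≤ 2 * δ := mul_le_mul h2 hb (norm_nonneg _) (by norm_num)
      _ < ε := by rw [hδdef]; linarith


/-- Nonzero spectral values of a compact self-adjoint operator are eigenvalues. -/
lemma calkin_eigen (K : H →L[ℂ] H) (hK : IsSelfAdjoint K) (hc : IsCompactOperator ⇑K)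
    {μ : ℝ} (hμ : μ ∈ spectrum ℝ K) (hμ0 : μ ≠ 0) :
    ∃ x : H, ‖x‖ = 1 ∧ K x = μ • x := by
  choose x hx1 hx2 using fun n : ℕ =>
    calkin_approx K hK hμ (ε := 1 / (n + 1)) (by positivity)
  have hcomp : IsCompact (closure (⇑K '' Metric.closedBall 0 1)) :=
    hc.isCompact_closure_image_closedBall (𝕜₁ := ℂ) 1
  have hmem : ∀ n, K (x n) ∈ closure (⇑K '' Metric.closedBall 0 1) := fun n =>
    subset_closure ⟨x n, by simp [hx1 n], rfl⟩
  obtain ⟨z, hz, φ, hφ, hlim⟩ := hcomp.tendsto_subseq hmem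
  have herr : Tendsto (fun n => K (x (φ n)) - μ • x (φ n)) atTop (𝓝 0) := by
    refine squeeze_zero_norm (fun n => ?_) tendsto_one_div_add_atTop_nhds_zero_nat
    refine le_trans (hx2 (φ n)).le ?_
    have h1 : (n : ℝ) + 1 ≤ (φ n : ℝ) + 1 := by
      have h0 := hφ.le_apply (x := n)
      have := (Nat.cast_le (α := ℝ)).mpr h0
      linarith
    exact one_div_le_one_div_of_le (by positivity) h1
  have hxlim : Tendsto (fun n => x (φ n)) atTop (𝓝 (μ⁻¹ • z)) := by
    have heq : (fun n => x (φ n))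
        = fun n => μ⁻¹ • (K (x (φ n)) - (K (x (φ n)) - μ • x (φ n))) := by
      funext n
      rw [sub_sub_cancel, inv_smul_smul₀ hμ0]
    rw [heq]
    have := (hlim.sub herr).const_smul (μ⁻¹)
    simpa using this
  have hnorm : ‖μ⁻¹ • z‖ = 1 := by
    have h1 : Tendsto (fun n => ‖x (φ n)‖) atTop (𝓝 ‖μ⁻¹ • z‖) := hxlim.norm
    have h2 : Tendsto (fun n : ℕ => (1 : ℝ)) atTop (𝓝 1) := tendsto_const_nhds
    have : (fun n => ‖x (φ n)‖) = fun _ : ℕ => (1 : ℝ) := funext fun n => hx1 (φ n)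
    rw [this] at h1
    exact tendsto_nhds_unique h1 h2
  refine ⟨μ⁻¹ • z, hnorm, ?_⟩
  have hKx : Tendsto (fun n => K (x (φ n))) atTop (𝓝 (K (μ⁻¹ • z))) :=
    (K.continuous.tendsto _).comp hxlim
  have : K (μ⁻¹ • z) = z := tendsto_nhds_unique hKx hlim
  rw [this, smul_inv_smul₀ hμ0]

omit [CompleteSpace H] in
lemma calkin_coe_smul (r : ℝ) (v : H) : r • v = (r : ℂ) • v := by
  rw [← algebraMap_smul ℂ r v, Complex.coe_algebraMap]

/-- Eigenvectors of a self-adjoint operator for distinct real eigenvalues are orthogonal. -/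
lemma calkin_orth (K : H →L[ℂ] H) (hK : IsSelfAdjoint K) {μ ν : ℝ} {x y : H}
    (hx : K x = μ • x) (hy : K y = ν • y) (hne : μ ≠ ν) :
    inner (𝕜 := ℂ) x y = 0 := by
  have hsym := (isSelfAdjoint_iff_isSymmetric (𝕜 := ℂ)).mp hK
  have h := hsym x y
  simp only [ContinuousLinearMap.coe_coe] at h
  rw [hx, hy, calkin_coe_smul, calkin_coe_smul, inner_smul_left, inner_smul_right,
    Complex.conj_ofReal] at h
  have h0 : ((μ : ℂ) - ν) * inner (𝕜 := ℂ) x y = 0 := by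
    rw [sub_mul, h, sub_self]
  rcases mul_eq_zero.mp h0 with h' | h'
  · exfalso
    apply hne
    have : (μ : ℂ) = ν := sub_eq_zero.mp h'
    exact_mod_cast this
  · exact h'

/-- A compact self-adjoint operator has a spectral gap in `(0, 1/4)`. -/
lemma calkin_gap (K : H →L[ℂ] H) (hK : IsSelfAdjoint K) (hc : IsCompactOperator ⇑K) :
    ∃ c : ℝ, c ∈ Set.Ioo (0 : ℝ) (1/4) ∧ c ∉ spectrum ℝ K := by
  by_contra h
  push_neg at h
  set μ : ℕ → ℝ := fun n => 1/8 + 1/(n + 9) with hμdef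
  have hμmem : ∀ n, μ n ∈ Set.Ioo (0 : ℝ) (1/4) := by
    intro n
    have h9 : (9 : ℝ) ≤ (n : ℝ) + 9 := by linarith [Nat.cast_nonneg (α := ℝ) n]
    have h1 : 1/((n : ℝ) + 9) ≤ 1/9 := one_div_le_one_div_of_le (by norm_num) h9
    have h2 : 0 < 1/((n : ℝ) + 9) := by positivity
    constructor
    · simp only [hμdef]; linarith
    · simp only [hμdef]; linarith
  have hμ8 : ∀ n, 1/8 ≤ μ n := by
    intro n
    have h2 : 0 < 1/((n : ℝ) + 9) := by positivity
    simp only [hμdef]; linarith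
  have hinj : Function.Injective μ := by
    have : StrictAnti μ := by
      intro a b hab
      simp only [hμdef]
      have : (a : ℝ) + 9 < (b : ℝ) + 9 := by
        have := (Nat.cast_lt (α := ℝ)).mpr hab
        linarith
      have := one_div_lt_one_div_of_lt (by positivity) this
      linarith
    exact this.injective
  choose e he1 he2 using fun n =>
    calkin_eigen K hK hc (h _ (hμmem n)) (by have := (hμmem n).1; linarith)
  have horth : ∀ m n, m ≠ n → inner (𝕜 := ℂ) (e m) (e n) = 0 := fun m n hmn =>
    calkin_orth K hK (he2 m) (he2 n) (fun h' => hmn (hinj h'))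
  have hdist : ∀ m n, m ≠ n → 1/6 < ‖K (e m) - K (e n)‖ := by
    intro m n hmn
    rw [he2 m, he2 n]
    have hinner : inner (𝕜 := ℂ) (μ m • e m) (μ n • e n) = 0 := by
      rw [calkin_coe_smul, calkin_coe_smul, inner_smul_left, inner_smul_right,
        horth m n hmn, mul_zero, mul_zero]
    have h2 : ‖μ m • e m - μ n • e n‖ ^ 2 = (μ m)^2 + (μ n)^2 := by
      rw [@norm_sub_sq ℂ, hinner]
      simp [norm_smul, he1, Real.norm_eq_abs, mul_pow, sq_abs]
    have h3 : (1/6 : ℝ)^2 < ‖μ m • e m - μ n • e n‖ ^ 2 := by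
      rw [h2]; nlinarith [hμ8 m, hμ8 n]
    exact lt_of_pow_lt_pow_left₀ 2 (norm_nonneg _) h3
  have hcomp : IsCompact (closure (⇑K '' Metric.closedBall 0 1)) :=
    hc.isCompact_closure_image_closedBall (𝕜₁ := ℂ) 1
  have hmem : ∀ n, K (e n) ∈ closure (⇑K '' Metric.closedBall 0 1) := fun n =>
    subset_closure ⟨e n, by simp [he1 n], rfl⟩
  obtain ⟨z, hz, φ, hφ, hlim⟩ := hcomp.tendsto_subseq hmem
  have hcauchy : CauchySeq (fun n => K (e (φ n))) := hlim.cauchySeq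
  obtain ⟨N, hN⟩ := Metric.cauchySeq_iff.mp hcauchy (1/6) (by norm_num)
  have hne : φ N ≠ φ (N + 1) := fun h' => by
    have := hφ.injective h'; omega
  have := hdist (φ N) (φ (N + 1)) hne
  have hd := hN N le_rfl (N + 1) (by omega)
  rw [dist_eq_norm] at hd
  linarith

omit [CompleteSpace H] in
lemma calkin_contOn_ite {s : Set ℝ} {t₁ : ℝ} (hs : t₁ ∉ s) {g₁ g₂ : ℝ → ℝ}
    (h₁ : ∀ x ∈ s, x < t₁ → ContinuousAt g₁ x) (h₂ : ∀ x ∈ s, t₁ < x → ContinuousAt g₂ x) :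
    ContinuousOn (fun t => if t < t₁ then g₁ t else g₂ t) s := by
  intro x hx
  rcases lt_or_gt_of_ne (fun h : x = t₁ => hs (h ▸ hx)) with h | h
  · have heq : (fun t => if t < t₁ then g₁ t else g₂ t) =ᶠ[𝓝 x] g₁ := by
      filter_upwards [Iio_mem_nhds h] with y hy
      exact if_pos hy
    exact ((h₁ x hx h).congr heq.symm).continuousWithinAt
  · have heq : (fun t => if t < t₁ then g₁ t else g₂ t) =ᶠ[𝓝 x] g₂ := by
      filter_upwards [Ioi_mem_nhds h] with y hy
      exact if_neg (not_lt.mpr (le_of_lt hy))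
    exact ((h₂ x hx h).congr heq.symm).continuousWithinAt

end Calkin

end CalkinAux

/-- (Calkin) If `T` is self-adjoint with `‖T‖ ≤ 1` and `T - T²` compact, then there is a
projection `P` with `P - T` compact. -/


theorem calkin_lemma {H : Type*} [NormedAddCommGroup H] [InnerProductSpace ℂ H]
    [CompleteSpace H] (T : H →L[ℂ] H)
    (hT : IsSelfAdjoint T) (hnorm : ‖T‖ ≤ 1)
    (hK : IsCompactOperator (⇑(T - T * T))) :
    ∃ P : H →L[ℂ] H, IsProjection P ∧ IsCompactOperator (⇑(P - T)) := by
  have hKsa : IsSelfAdjoint (T - T * T) := by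
    refine hT.sub ?_
    rw [IsSelfAdjoint, star_mul, hT.star_eq]
  obtain ⟨c, ⟨hc0, hc4⟩, hcs⟩ := calkin_gap (T - T * T) hKsa hK
  set s := Real.sqrt (1 - 4 * c) with hsdef
  have hs0 : 0 < s := Real.sqrt_pos.mpr (by linarith)
  have hs1 : s < 1 := by
    have h := Real.sqrt_lt_sqrt (by linarith) (show 1 - 4 * c < 1 by linarith)
    simpa using h
  have hsq : s ^ 2 = 1 - 4 * c := Real.sq_sqrt (by linarith)
  set t₁ := (1 - s) / 2 with ht₁def
  have ht₁0 : 0 < t₁ := by rw [ht₁def]; linarith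
  have ht₁1 : t₁ < 1 := by rw [ht₁def]; linarith
  have hht : t₁ - t₁ * t₁ = c := by rw [ht₁def]; nlinarith [hsq]
  have hKcfc : cfc (fun t : ℝ => t - t * t) T = T - T * T := by
    rw [cfc_sub (fun t : ℝ => t) (fun t : ℝ => t * t) T (by fun_prop) (by fun_prop),
      cfc_mul (fun t : ℝ => t) (fun t : ℝ => t) T (by fun_prop) (by fun_prop),
      cfc_id' ℝ T]
  have ht₁spec : t₁ ∉ spectrum ℝ T := by
    intro hmem
    apply hcs
    have himg : c ∈ (fun t : ℝ => t - t * t) '' spectrum ℝ T := ⟨t₁, hmem, hht⟩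
    rwa [← cfc_map_spectrum (fun t : ℝ => t - t * t) T hT (by fun_prop), hKcfc] at himg
  set f : ℝ → ℝ := fun t => if t < t₁ then 0 else 1 with hfdef
  set k : ℝ → ℝ := fun t => if t < t₁ then -(1 - t)⁻¹ else t⁻¹ with hkdef
  have hfc : ContinuousOn f (spectrum ℝ T) :=
    calkin_contOn_ite ht₁spec (fun _ _ _ => continuousAt_const)
      (fun _ _ _ => continuousAt_const)
  have hkc : ContinuousOn k (spectrum ℝ T) := by
    refine calkin_contOn_ite ht₁spec (fun x _ hx => ?_) (fun x _ hx => ?_)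
    · have hne : (1 : ℝ) - x ≠ 0 := by
        have : x < 1 := hx.trans ht₁1
        intro h0; linarith [sub_eq_zero.mp h0]
      exact ((continuousAt_const.sub continuousAt_id).inv₀ hne).neg
    · have hne : x ≠ 0 := by
        have : 0 < x := ht₁0.trans hx
        linarith
      exact continuousAt_inv₀ hne
  refine ⟨cfc f T, ⟨cfc_predicate f T, ?_⟩, ?_⟩
  · rw [← cfc_mul f f T hfc hfc]
    refine cfc_congr fun x _ => ?_
    by_cases h : x < t₁ <;> simp [hfdef, h]
  · have key : cfc f T - T = (T - T * T) * cfc k T := by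
      have h1 : cfc f T - T = cfc (fun t : ℝ => f t - t) T := by
        rw [cfc_sub f (fun t : ℝ => t) T hfc (by fun_prop), cfc_id' ℝ T]
      rw [h1, ← hKcfc, ← cfc_mul (fun t : ℝ => t - t * t) k T (by fun_prop) hkc]
      refine cfc_congr fun x hx => ?_
      have hxne : x ≠ t₁ := fun h => ht₁spec (h ▸ hx)
      rcases lt_or_gt_of_ne hxne with h | h
      · have hne : (1 : ℝ) - x ≠ 0 := by
          have : x < 1 := h.trans ht₁1
          intro h0; linarith [sub_eq_zero.mp h0]
        simp only [hfdef, hkdef, if_pos h]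
        field_simp
        ring
      · have hne : x ≠ 0 := by
          have : 0 < x := ht₁0.trans h
          linarith
        simp only [hfdef, hkdef, if_neg (not_lt.mpr h.le)]
        field_simp
    rw [key]
    have hco : ⇑((T - T * T) * cfc k T) = ⇑(T - T * T) ∘ ⇑(cfc k T) := rfl
    rw [hco]
    exact hK.comp_clm _
end

section
/- Let H be a complex Hilbert space and let f : [0,1] → B(H) be strongly continuous, such that each f(t) is self-adjoint with 0 ≤ f(t) ≤ 1, and such that the map t ↦ f(t) − f(t)² is continuous in operator norm with f(t) − f(t)² compact for every t. Then there exist n ∈ ℕ, a partition 0 = x₀ < x₁ < ⋯ < x_{n+1} = 1, and for each i = 0,…,n a strongly continuous map f_i : [x_i, x_{i+1}] → B(H) with each f_i(t) a projection, such that for every i the map t ↦ f(t) − f_i(t) is continuous in operator norm and compact-operator valued on [x_i, x_{i+1}], and f_i(x_i) − f_{i−1}(x_i) is compact for i = 1,…,n. (Every projection in the corona algebra of C([0,1]) ⊗ K admits a projection-valued local lifting.) -/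
/-!
Strong continuity on `[0, 1]` bounds `‖f t‖` uniformly (Banach–Steinhaus). The spectrum of the
compact self-adjoint operator `f t₀ - f t₀ ^ 2` meets `[ε, ∞)` in a finite set for every `ε > 0`,
so some `[a, b] ⊂ (0, 1)` is mapped by `x ↦ x - x ^ 2` outside it; as the spectrum is upper
semicontinuous and `t ↦ f t - f t ^ 2` is norm continuous, the spectrum of `f t` avoids `[a, b]`
for `t` near `t₀`. A continuous `χ` equal to `0` below `a` and `1` above `b` then makes `χ (f t)` a
projection with `f t - χ (f t) = u (f t) * (f t - f t ^ 2)` for a continuous `u`. This is compact,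
and norm continuous because a bounded strongly continuous family times a norm continuous family of
compact operators is norm continuous. A Lebesgue number of these neighbourhoods gives the partition.
-/

open ContinuousLinearMap Module Set

open Filter Topology Metric

section OperatorFamilies

variable {X 𝕜 E F G : Type*} [RCLike 𝕜]
  [NormedAddCommGroup E] [NormedSpace 𝕜 E] [NormedAddCommGroup F] [NormedSpace 𝕜 F]
  [NormedAddCommGroup G] [NormedSpace 𝕜 G]

theorem IsCompact.exists_norm_le_of_continuousOn_apply [TopologicalSpace X] [CompleteSpace E]
    {K : Set X} (hK : IsCompact K) {T : X → E →L[𝕜] F} (hT : ∀ v, ContinuousOn (fun s => T s v) K) :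
    ∃ C, ∀ s ∈ K, ‖T s‖ ≤ C := by
  obtain ⟨C, hC⟩ := banach_steinhaus (g := fun s : K => T s) fun v =>
    (hK.exists_bound_of_continuousOn (hT v)).imp fun _ hC s => hC s s.2
  exact ⟨C, fun s hs => hC ⟨s, hs⟩⟩

theorem ContinuousOn.clm_apply_of_norm_le [TopologicalSpace X] {T : X → E →L[𝕜] F} {g : X → E}
    {J : Set X} {M : ℝ}    (hTM : ∀ s ∈ J, ‖T s‖ ≤ M) (hT : ∀ v, ContinuousOn (fun s => T s v) J)
    (hg : ContinuousOn g J) : ContinuousOn (fun s => T s (g s)) J := by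
  intro t ht
  have hsplit : ∀ s, T s (g s) = T s (g s - g t) + T s (g t) := fun s => by
    rw [map_sub, sub_add_cancel]
  have h₁ : Tendsto (fun s => T s (g s - g t)) (𝓝[J] t) (𝓝 0) := by
    refine squeeze_zero_norm' ?_ (by simpa using ((hg t ht).sub_const (g t)).norm.const_mul M)
    filter_upwards [self_mem_nhdsWithin] with s hs
    exact (T s).le_of_opNorm_le (hTM s hs) _
  have h := h₁.add (hT (g t) t ht)
  rw [zero_add] at h
  exact h.congr fun s => (hsplit s).symm

theorem tendstoUniformlyOn_clm_apply_of_norm_le {l : Filter X} {T : X → E →L[𝕜] F}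
    {T₀ : E →L[𝕜] F} {M : ℝ} (hTM : ∀ᶠ s in l, ‖T s‖ ≤ M)
    (hT : ∀ v, Tendsto (fun s => T s v) l (𝓝 (T₀ v))) {C : Set E} (hC : IsCompact C) :
    TendstoUniformlyOn (fun s => ⇑(T s)) T₀ l C := by
  rw [Metric.tendstoUniformlyOn_iff]
  intro ε hε
  set ρ := ε / (3 * (|M| + ‖T₀‖ + 1))
  have hρ : 0 < ρ := by positivity
  have hρM : (|M| + ‖T₀‖) * ρ < ε / 3 := by
    have h3 : (|M| + ‖T₀‖ + 1) * ρ = ε / 3 := by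
      simp only [ρ]; field_simp
    nlinarith
  obtain ⟨Y, -, hYfin, hCY⟩ := hC.finite_cover_balls hρ
  have hY : ∀ᶠ s in l, ∀ y ∈ Y, ‖T s y - T₀ y‖ < ε / 3 :=
    hYfin.eventually_all.2 fun y _ => by
      simpa [dist_eq_norm] using (hT y).eventually (ball_mem_nhds (T₀ y) (by positivity))
  filter_upwards [hTM, hY] with s hsM hsY w hw
  obtain ⟨y, hy, hwy⟩ := mem_iUnion₂.1 (hCY hw)
  rw [mem_ball, dist_eq_norm] at hwy
  have hsplit : T₀ w - T s w = T s (y - w) - (T s y - T₀ y) + T₀ (w - y) := by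
    simp only [map_sub]; abel
  calc dist (T₀ w) (T s w) = ‖T s (y - w) - (T s y - T₀ y) + T₀ (w - y)‖ := by
        rw [dist_eq_norm, hsplit]
    _ ≤ M * ρ + ε / 3 + ‖T₀‖ * ρ := by
        refine norm_add_le_of_le (norm_sub_le_of_le ?_ (hsY y hy).le) ?_
        · exact (T s).le_of_opNorm_le_of_le hsM (by rw [norm_sub_rev]; exact hwy.le)
        · exact T₀.le_of_opNorm_le_of_le le_rfl hwy.le
    _ < ε := by nlinarith [le_abs_self M]

theorem ContinuousOn.clm_comp_of_isCompactOperator [TopologicalSpace X]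
    {T : X → F →L[𝕜] G} {K : X → E →L[𝕜] F}
    {J : Set X} {M : ℝ} (hTM : ∀ s ∈ J, ‖T s‖ ≤ M) (hT : ∀ v, ContinuousOn (fun s => T s v) J)
    (hK : ContinuousOn K J) (hKc : ∀ s ∈ J, IsCompactOperator (K s)) :
    ContinuousOn (fun s => (T s).comp (K s)) J := by
  intro t ht
  obtain ⟨C, hC, hKC⟩ := (hKc t ht).image_closedBall_subset_compact 1
  have hunif := tendstoUniformlyOn_clm_apply_of_norm_le
    (eventually_nhdsWithin_of_forall hTM) (fun v => hT v t ht) hC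
  have h₁ : Tendsto (fun s => (T s).comp (K s - K t)) (𝓝[J] t) (𝓝 0) := by
    refine squeeze_zero_norm' ?_ (by simpa using ((hK t ht).sub_const (K t)).norm.const_mul M)
    filter_upwards [self_mem_nhdsWithin] with s hs
    exact (opNorm_comp_le _ _).trans (mul_le_mul_of_nonneg_right (hTM s hs) (norm_nonneg _))
  have h₂ : Tendsto (fun s => (T s - T t).comp (K t)) (𝓝[J] t) (𝓝 0) := by
    rw [Metric.tendsto_nhds]
    intro ε hε
    filter_upwards [Metric.tendstoUniformlyOn_iff.1 hunif (ε / 2) (half_pos hε)] with s hs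
    rw [dist_zero_right]
    refine (opNorm_le_of_unit_norm (half_pos hε).le fun v hv => ?_).trans_lt (half_lt_self hε)
    have hv' := hs _ (hKC ⟨v, by simp [hv], rfl⟩)
    rw [dist_comm, dist_eq_norm] at hv'
    exact hv'.le
  have hsplit : ∀ s, (T s).comp (K s) = (T s).comp (K s - K t) + (T s - T t).comp (K t) +
      (T t).comp (K t) := fun s => by
    rw [ContinuousLinearMap.comp_sub, ContinuousLinearMap.sub_comp]; abel
  have h := (h₁.add h₂).add_const ((T t).comp (K t))
  rw [zero_add, zero_add] at h
  exact h.congr fun s => (hsplit s).symm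

theorem continuousOn_clm_pow_apply [TopologicalSpace X] {T : X → E →L[𝕜] E} {J : Set X} {M : ℝ}
    (hTM : ∀ s ∈ J, ‖T s‖ ≤ M) (hT : ∀ v, ContinuousOn (fun s => T s v) J) (n : ℕ) (v : E) :
    ContinuousOn (fun s => (T s ^ n) v) J := by
  induction n with
  | zero => simpa using continuousOn_const
  | succ n ih =>
    simp only [pow_succ']
    exact ContinuousOn.clm_apply_of_norm_le (g := fun s => (T s ^ n) v) hTM hT ih

theorem continuousOn_aeval_clm_apply [TopologicalSpace X] [NormedSpace ℝ E]
    [IsScalarTower ℝ 𝕜 E] {T : X → E →L[𝕜] E} {J : Set X} {M : ℝ}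
    (hTM : ∀ s ∈ J, ‖T s‖ ≤ M) (hT : ∀ v, ContinuousOn (fun s => T s v) J)
    (p : Polynomial ℝ) (v : E) : ContinuousOn (fun s => Polynomial.aeval (T s) p v) J := by
  induction p using Polynomial.induction_on' with
  | add p q hp hq =>
    simp only [map_add, add_apply]
    exact hp.add hq
  | monomial n a =>
    simp only [Polynomial.aeval_monomial, Algebra.algebraMap_eq_smul_one, smul_mul_assoc, one_mul,
      smul_apply]
    exact (continuousOn_clm_pow_apply hTM hT n v).const_smul a

end OperatorFamilies

theorem spectrum.eventually_disjoint_of_isCompact {𝕜 A : Type*} [NontriviallyNormedField 𝕜]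
    [NormedRing A] [NormedAlgebra 𝕜 A] [CompleteSpace A] {a : A} {K : Set 𝕜} (hK : IsCompact K)
    (h : Disjoint (spectrum 𝕜 a) K) : ∀ᶠ b in 𝓝 a, Disjoint (spectrum 𝕜 b) K := by
  have hres : ∀ z ∈ K, ∀ᶠ p : A × 𝕜 in 𝓝 (a, z), p.2 ∉ spectrum 𝕜 p.1 := fun z hz => by
    have hcont : Continuous fun p : A × 𝕜 => algebraMap 𝕜 A p.2 - p.1 := by fun_prop
    exact (hcont.tendsto (a, z)).eventually
      (Units.isOpen.mem_nhds (spectrum.notMem_iff.1 (disjoint_right.1 h hz)))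
      |>.mono fun p hp => spectrum.notMem_iff.2 hp
  exact (hK.eventually_forall_of_forall_eventually hres).mono fun b hb => disjoint_right.2 hb

section FunctionalCalculus

variable {X H : Type*} [NormedAddCommGroup H] [InnerProductSpace ℂ H] [CompleteSpace H]

theorem spectrum_subset_Icc_of_norm_le {a : H →L[ℂ] H} {R : ℝ} (h : ‖a‖ ≤ R) :
    spectrum ℝ a ⊆ Icc (-R) R := by
  rcases subsingleton_or_nontrivial H with hH | hH
  · simp [spectrum.of_subsingleton]
  · exact fun x hx => abs_le.1 ((spectrum.norm_le_norm_of_mem hx).trans h)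

theorem continuousOn_cfc_apply_of_norm_le [TopologicalSpace X] {T : X → H →L[ℂ] H} {J : Set X}
    {R : ℝ} (hsa : ∀ s ∈ J, IsSelfAdjoint (T s)) (hTR : ∀ s ∈ J, ‖T s‖ ≤ R)
    (hT : ∀ v, ContinuousOn (fun s => T s v) J) {u : ℝ → ℝ} (hu : ContinuousOn u (Icc (-R) R))
    (v : H) : ContinuousOn (fun s => cfc u (T s) v) J := by
  have hspec : ∀ s ∈ J, spectrum ℝ (T s) ⊆ Icc (-R) R := fun s hs =>
    spectrum_subset_Icc_of_norm_le (hTR s hs)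
  choose p hp using fun n : ℕ =>
    exists_polynomial_near_of_continuousOn (-R) R u hu (1 / (n + 1)) Nat.one_div_pos_of_nat
  refine TendstoUniformlyOn.continuousOn (F := fun n s => Polynomial.aeval (T s) (p n) v)
    (p := atTop) ?_
    (Frequently.of_forall fun n => continuousOn_aeval_clm_apply hTR hT (p n) v)
  rw [Metric.tendstoUniformlyOn_iff]
  intro ε hε
  have hlim : Tendsto (fun n : ℕ => 1 / ((n : ℝ) + 1) * ‖v‖) atTop (𝓝 0) := by
    simpa using tendsto_one_div_add_atTop_nhds_zero_nat.mul_const ‖v‖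
  filter_upwards [hlim.eventually (gt_mem_nhds hε)] with n hn s hs
  have happrox : ‖cfc u (T s) - Polynomial.aeval (T s) (p n)‖ ≤ 1 / (n + 1) := by
    rw [← cfc_polynomial (p n) (T s) (hsa s hs), ← cfc_sub u _ (T s) ((hu.mono (hspec s hs)))]
    refine norm_cfc_le Nat.one_div_pos_of_nat.le fun x hx => ?_
    rw [Real.norm_eq_abs, abs_sub_comm]
    exact (hp n x (hspec s hs hx)).le
  rw [dist_eq_norm, ← sub_apply]
  exact ((cfc u (T s) - Polynomial.aeval (T s) (p n)).le_of_opNorm_le happrox v).trans_lt hn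

theorem isProjection_cfc {a : H →L[ℂ] H} {χ : ℝ → ℝ} (hχ : ContinuousOn χ (spectrum ℝ a))
    (hidem : ∀ x ∈ spectrum ℝ a, χ x * χ x = χ x) : IsProjection (cfc χ a) := by
  refine ⟨cfc_predicate χ a, ?_⟩
  by_cases ha : IsSelfAdjoint a
  · rw [← cfc_mul χ χ a hχ hχ]
    exact cfc_congr hidem
  · simp [cfc_apply_of_not_predicate a ha]

end FunctionalCalculus

section CompactSelfAdjoint

variable {H : Type*} [NormedAddCommGroup H] [InnerProductSpace ℂ H] [CompleteSpace H]

theorem IsCompactOperator.exists_unit_eigenvector_of_mem_spectrum {T : H →L[ℂ] H}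
    (hT : IsCompactOperator T) {μ : ℝ} (hμ : μ ∈ spectrum ℝ T) (hμ0 : μ ≠ 0) :
    ∃ v : H, ‖v‖ = 1 ∧ T v = (μ : ℂ) • v := by
  rw [← spectrum.algebraMap_mem_iff ℂ, Complex.coe_algebraMap,
    ← hT.hasEigenvalue_iff_mem_spectrum (Complex.ofReal_ne_zero.2 hμ0)] at hμ
  obtain ⟨v, hv, hv0⟩ := hμ.exists_hasEigenvector
  have hTv : T v = (μ : ℂ) • v := Module.End.mem_eigenspace_iff.1 hv
  refine ⟨(‖v‖⁻¹ : ℂ) • v, by simp [norm_smul, hv0], ?_⟩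
  rw [map_smul, hTv, smul_comm]

theorem IsCompactOperator.finite_spectrum_inter_Ici {T : H →L[ℂ] H} (hT : IsCompactOperator T)
    (hsa : IsSelfAdjoint T) {ε : ℝ} (hε : 0 < ε) : (spectrum ℝ T ∩ Ici ε).Finite := by
  by_contra hinf
  let μ := (Set.infinite_coe_iff.2 hinf).natEmbedding _
  have hμ : ∀ n, (μ n : ℝ) ∈ spectrum ℝ T ∩ Ici ε := fun n => (μ n).2
  choose v hv1 hTv using fun n =>
    hT.exists_unit_eigenvector_of_mem_spectrum (hμ n).1 (hε.trans_le (hμ n).2).ne'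
  have horth : Pairwise fun m n => inner ℂ (v m) (v n) = 0 := fun m n hmn =>
    (hsa.isSymmetric.orthogonalFamily_eigenspaces
      (fun h => hmn (μ.injective (Subtype.ext (by exact_mod_cast h))))
      ⟨v m, Module.End.mem_eigenspace_iff.2 (hTv m)⟩ ⟨v n, Module.End.mem_eigenspace_iff.2 (hTv n)⟩)
  have hsep : Pairwise fun m n => ε ≤ ‖T (v m) - T (v n)‖ := fun m n hmn => by
    have hsq : ‖T (v m) - T (v n)‖ ^ 2 = (μ m : ℝ) ^ 2 + (μ n : ℝ) ^ 2 := by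
      rw [hTv, hTv, @norm_sub_sq ℂ, inner_smul_left, inner_smul_right, horth hmn]
      simp [norm_smul, hv1]
    have hm : ε ≤ μ m := (hμ m).2
    refine le_of_pow_le_pow_left₀ two_ne_zero (norm_nonneg _) ?_
    nlinarith
  obtain ⟨C, hC, hTC⟩ := hT.image_closedBall_subset_compact 1
  obtain ⟨y, -, φ, hφ, hφy⟩ := hC.tendsto_subseq fun n => hTC ⟨v n, by simp [hv1], rfl⟩
  obtain ⟨N, hN⟩ := Metric.cauchySeq_iff'.1 hφy.cauchySeq ε hε
  have hlt := hN (N + 1) N.le_succ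
  rw [dist_eq_norm] at hlt
  exact (hsep (hφ.injective.ne N.succ_ne_self)).not_gt hlt

theorem IsCompactOperator.exists_Icc_disjoint_spectrum {d : H →L[ℂ] H} (hd : IsCompactOperator d)
    (hsa : IsSelfAdjoint d) : ∃ a b : ℝ, 0 < a ∧ a < b ∧ b < 1 ∧
      Disjoint (spectrum ℝ d) ((fun x => x - x * x) '' Icc a b) := by
  -- `x ↦ x - x * x` maps `(0, 1 / 2)` onto `(0, 1 / 4)`, and only finitely many points of the
  -- spectrum lie above `1 / 8`
  obtain ⟨μ, ⟨hμ₁, hμ₂⟩, hμ⟩ := ((Ioo_infinite (by norm_num : (1 / 8 : ℝ) < 1 / 4)).sdiff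
    (hd.finite_spectrum_inter_Ici hsa (by norm_num : (0 : ℝ) < 1 / 8))).nonempty
  obtain ⟨c, hc, rfl⟩ : μ ∈ (fun x : ℝ => x - x * x) '' Ioo 0 (1 / 2) :=
    intermediate_value_Ioo (by norm_num) (by fun_prop) ⟨by norm_num; linarith, by linarith⟩
  have hnhds : (fun x : ℝ => x - x * x) ⁻¹' (spectrum ℝ d)ᶜ ∩ Ioo 0 1 ∈ 𝓝 c :=
    (((spectrum.isClosed d).isOpen_compl.preimage (by fun_prop)).inter isOpen_Ioo).mem_nhds
      ⟨fun h => hμ ⟨h, hμ₁.le⟩, hc.1, hc.2.trans (by norm_num)⟩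
  obtain ⟨r, hr, hball⟩ := Metric.mem_nhds_iff.1 hnhds
  have hIcc : Icc (c - r / 2) (c + r / 2) ⊆
      (fun x : ℝ => x - x * x) ⁻¹' (spectrum ℝ d)ᶜ ∩ Ioo 0 1 := by
    rw [← Real.closedBall_eq_Icc]
    exact (closedBall_subset_ball (half_lt_self hr)).trans hball
  refine ⟨c - r / 2, c + r / 2, (hIcc ⟨le_rfl, by linarith⟩).2.1, by linarith,
    (hIcc ⟨by linarith, le_rfl⟩).2.2, disjoint_right.2 ?_⟩
  rintro _ ⟨x, hx, rfl⟩
  exact (hIcc hx).1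

end CompactSelfAdjoint

theorem exists_continuous_step_and_quotient {a b : ℝ} (ha : 0 < a) (hab : a < b) (hb : b < 1) :
    ∃ χ u : ℝ → ℝ, Continuous χ ∧ Continuous u ∧
      ∀ x ∉ Ioo a b, χ x * χ x = χ x ∧ x - χ x = u x * (x - x * x) := by
  set χ : ℝ → ℝ := fun x => max 0 (min 1 ((x - a) / (b - a)))
  have hχ₀ : ∀ x ≤ a, χ x = 0 := fun x hx =>
    max_eq_left ((min_le_right _ _).trans (div_nonpos_of_nonpos_of_nonneg (by linarith)
      (by linarith)))
  have hχ₁ : ∀ x, b ≤ x → χ x = 1 := fun x hx => by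
    simp only [χ, min_eq_left ((one_le_div (sub_pos.2 hab)).2 (sub_le_sub_right hx a)),
      max_eq_right zero_le_one]
  have hden₀ : ∀ x, 1 - min x a ≠ 0 := fun x => by linarith [min_le_right x a]
  have hden₁ : ∀ x, max x b ≠ 0 := fun x => by linarith [le_max_right x b]
  -- `u = 1 / (1 - x)` below `a` and `u = -1 / x` above `b`; `min` and `max` keep the
  -- denominators away from `0` everywhere
  refine ⟨χ, fun x => (1 - χ x) / (1 - min x a) - χ x / max x b, by fun_prop,
    ((by fun_prop : Continuous fun x => 1 - χ x).div (by fun_prop) hden₀).sub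
      ((by fun_prop : Continuous χ).div (by fun_prop) hden₁), fun x hx => ?_⟩
  rcases le_or_gt x a with hxa | hxa
  · have h1x : 1 - x ≠ 0 := by linarith
    simp only [hχ₀ x hxa, min_eq_left hxa]
    refine ⟨by norm_num, ?_⟩
    field_simp
    ring
  · have hxb : b ≤ x := not_lt.1 fun h => hx ⟨hxa, h⟩
    have hx0 : x ≠ 0 := by linarith
    simp only [hχ₁ x hxb, max_eq_left hxb]
    refine ⟨by norm_num, ?_⟩
    field_simp
    ring

section Lifting

variable {X H : Type*} [TopologicalSpace X] [NormedAddCommGroup H] [InnerProductSpace ℂ H]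
  [CompleteSpace H]

def IsProjectionLiftOn (f g : X → H →L[ℂ] H) (s : Set X) : Prop :=
  (∀ v, ContinuousOn (fun t => g t v) s) ∧ (∀ t ∈ s, IsProjection (g t)) ∧
    ContinuousOn (fun t => f t - g t) s ∧ ∀ t ∈ s, IsCompactOperator (f t - g t)

theorem IsProjectionLiftOn.mono {f g : X → H →L[ℂ] H} {s s' : Set X}
    (h : IsProjectionLiftOn f g s) (hs : s' ⊆ s) : IsProjectionLiftOn f g s' :=
  ⟨fun v => (h.1 v).mono hs, fun t ht => h.2.1 t (hs ht), h.2.2.1.mono hs,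
    fun t ht => h.2.2.2 t (hs ht)⟩

theorem IsProjectionLiftOn.isCompactOperator_sub {f g g' : X → H →L[ℂ] H} {s s' : Set X}
    (h : IsProjectionLiftOn f g s) (h' : IsProjectionLiftOn f g' s') {t : X} (hs : t ∈ s)
    (hs' : t ∈ s') : IsCompactOperator (g' t - g t) := by
  rw [← sub_sub_sub_cancel_left _ _ (f t), FunLike.coe_sub]
  exact (h.2.2.2 t hs).sub (h'.2.2.2 t hs')

theorem exists_isProjectionLiftOn_nhds {f : X → H →L[ℂ] H} {J : Set X} {R : ℝ}
    (hsc : ∀ v, ContinuousOn (fun t => f t v) J) (hsa : ∀ t ∈ J, IsSelfAdjoint (f t))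
    (hR : ∀ t ∈ J, ‖f t‖ ≤ R) (hnc : ContinuousOn (fun t => f t - f t * f t) J)
    (hK : ∀ t ∈ J, IsCompactOperator (f t - f t * f t)) {t₀ : X} (ht₀ : t₀ ∈ J) :
    ∃ U ∈ 𝓝 t₀, ∃ g, IsProjectionLiftOn f g (J ∩ U) := by
  set ψ : ℝ → ℝ := fun x => x - x * x
  have hψ : ∀ t ∈ J, cfc ψ (f t) = f t - f t * f t := fun t ht => by
    rw [cfc_sub (fun x : ℝ => x) (fun x => x * x) (f t),
      cfc_mul (fun x : ℝ => x) (fun x => x) (f t), cfc_id' ℝ (f t) (hsa t ht)]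
  obtain ⟨a, b, ha, hab, hb, hgap⟩ :=
    (hK t₀ ht₀).exists_Icc_disjoint_spectrum (hψ t₀ ht₀ ▸ cfc_predicate ψ (f t₀))
  obtain ⟨U, hU, hUJ⟩ := mem_nhdsWithin_iff_exists_mem_nhds_inter.1 <| (hnc t₀ ht₀).eventually
    (spectrum.eventually_disjoint_of_isCompact (isCompact_Icc.image (by fun_prop)) hgap)
  have hgapf : ∀ t ∈ J ∩ U, ∀ x ∈ spectrum ℝ (f t), x ∉ Ioo a b := fun t ht x hx hxab => by
    refine disjoint_left.1 (hUJ ⟨ht.2, ht.1⟩) ?_ ⟨x, Ioo_subset_Icc_self hxab, rfl⟩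
    rw [← hψ t ht.1, cfc_map_spectrum ψ (f t) (hsa t ht.1)]
    exact ⟨x, hx, rfl⟩
  obtain ⟨χ, u, hχ, hu, hχu⟩ := exists_continuous_step_and_quotient ha hab hb
  have hfac : ∀ t ∈ J ∩ U, f t - cfc χ (f t) = cfc u (f t) * (f t - f t * f t) := fun t ht =>
    calc f t - cfc χ (f t) = cfc (fun x => x - χ x) (f t) := by
          rw [cfc_sub (fun x => x) χ (f t), cfc_id' ℝ (f t) (hsa t ht.1)]
      _ = cfc (fun x => u x * ψ x) (f t) := cfc_congr fun x hx => (hχu x (hgapf t ht x hx)).2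
      _ = cfc u (f t) * (f t - f t * f t) := by
          rw [cfc_mul u ψ (f t), hψ t ht.1]
  obtain ⟨M, hM0, hM⟩ := ((isCompact_Icc (a := -R) (b := R)).image_of_continuousOn
    hu.continuousOn).isBounded.exists_pos_norm_le
  have huM : ∀ t ∈ J, ‖cfc u (f t)‖ ≤ M := fun t ht =>
    norm_cfc_le hM0.le fun x hx => hM _ ⟨x, spectrum_subset_Icc_of_norm_le (hR t ht) hx, rfl⟩
  refine ⟨U, hU, fun t => cfc χ (f t), fun v => ?_, fun t ht => ?_, ?_, fun t ht => ?_⟩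
  · exact (continuousOn_cfc_apply_of_norm_le hsa hR hsc hχ.continuousOn v).mono inter_subset_left
  · exact isProjection_cfc hχ.continuousOn fun x hx => (hχu x (hgapf t ht x hx)).1
  · refine (ContinuousOn.clm_comp_of_isCompactOperator (fun t ht => huM t ht.1)
      (fun v => (continuousOn_cfc_apply_of_norm_le hsa hR hsc hu.continuousOn v).mono
        inter_subset_left) (hnc.mono inter_subset_left) fun t ht => hK t ht.1).congr hfac
  · rw [hfac t ht]
    exact (hK t ht.1).clm_comp _

end Lifting

theorem exists_nat_forall_Icc_div_subset {U : ℝ → Set ℝ} (hU : ∀ t ∈ Icc (0 : ℝ) 1, U t ∈ 𝓝 t) :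
    ∃ n : ℕ, ∀ i ≤ n, ∃ t ∈ Icc (0 : ℝ) 1,
      Icc ((i : ℝ) / (n + 1)) (((i + 1 : ℕ) : ℝ) / (n + 1)) ⊆ Icc 0 1 ∩ U t := by
  obtain ⟨V, hV, hVU⟩ := lebesgue_number_lemma_nhds' (U := fun t _ => U t) isCompact_Icc hU
  obtain ⟨δ, hδ, hδV⟩ := Metric.mem_uniformity_dist.1 hV
  obtain ⟨n, hn⟩ := exists_nat_one_div_lt hδ
  refine ⟨n, fun i hi => ?_⟩
  have hn0 : (0 : ℝ) < n + 1 := by positivity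
  have hi' : ((i + 1 : ℕ) : ℝ) ≤ n + 1 := by exact_mod_cast Nat.succ_le_succ hi
  obtain ⟨⟨t, ht⟩, htU⟩ := hVU ((i : ℝ) / (n + 1))
    ⟨by positivity, (div_le_one hn0).2 (by push_cast at hi'; linarith)⟩
  refine ⟨t, ht, fun y hy => ⟨⟨(by positivity : (0 : ℝ) ≤ i / (n + 1)).trans hy.1,
    hy.2.trans ((div_le_one hn0).2 hi')⟩, htU (hδV ?_)⟩⟩
  have hlen : ((i + 1 : ℕ) : ℝ) / (n + 1) - i / (n + 1) = 1 / (n + 1) := by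
    push_cast; ring
  rw [Real.dist_eq, abs_lt]
  constructor <;> linarith [hy.1, hy.2]

theorem projection_local_lifting_general {H : Type*} [NormedAddCommGroup H]
    [InnerProductSpace ℂ H] [CompleteSpace H]
    (f : ℝ → H →L[ℂ] H)
    (hsc : ∀ v : H, ContinuousOn (fun t => f t v) (Icc (0:ℝ) 1))
    (hsa : ∀ t ∈ Icc (0:ℝ) 1, IsSelfAdjoint (f t))
    (hnc : ContinuousOn (fun t => f t - f t * f t) (Icc (0:ℝ) 1))
    (hK : ∀ t ∈ Icc (0:ℝ) 1, IsCompactOperator (⇑(f t - f t * f t))) :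
    ∃ (n : ℕ) (x : ℕ → ℝ) (g : ℕ → ℝ → H →L[ℂ] H),
      x 0 = 0 ∧ x (n + 1) = 1 ∧ (∀ i ≤ n, x i < x (i + 1)) ∧
      (∀ i ≤ n, ∀ v : H, ContinuousOn (fun t => g i t v) (Icc (x i) (x (i + 1)))) ∧
      (∀ i ≤ n, ∀ t ∈ Icc (x i) (x (i + 1)), IsProjection (g i t)) ∧
      (∀ i ≤ n, ContinuousOn (fun t => f t - g i t) (Icc (x i) (x (i + 1)))) ∧
      (∀ i ≤ n, ∀ t ∈ Icc (x i) (x (i + 1)), IsCompactOperator (⇑(f t - g i t))) ∧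
      (∀ i, 1 ≤ i → i ≤ n → IsCompactOperator (⇑(g i (x i) - g (i - 1) (x i)))) := by
  obtain ⟨R, hR⟩ := isCompact_Icc.exists_norm_le_of_continuousOn_apply hsc
  choose! U hU G hG using fun t (ht : t ∈ Icc (0 : ℝ) 1) =>
    exists_isProjectionLiftOn_nhds hsc hsa hR hnc hK ht
  obtain ⟨n, hn⟩ := exists_nat_forall_Icc_div_subset hU
  choose! τ hτ hτU using hn
  set x : ℕ → ℝ := fun i => i / (n + 1)
  have hlift : ∀ i ≤ n, IsProjectionLiftOn f (G (τ i)) (Icc (x i) (x (i + 1))) := fun i hi =>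
    (hG _ (hτ i hi)).mono (hτU i hi)
  have hx : ∀ i, x i < x (i + 1) := fun i => by
    simp only [x]; gcongr; linarith
  refine ⟨n, x, fun i => G (τ i), by simp [x], by simp [x, Nat.cast_add_one_ne_zero],
    fun i _ => hx i, fun i hi => (hlift i hi).1, fun i hi => (hlift i hi).2.1,
    fun i hi => (hlift i hi).2.2.1, fun i hi => (hlift i hi).2.2.2, fun i hi₁ hin => ?_⟩
  obtain ⟨j, rfl⟩ := Nat.exists_eq_add_of_le' hi₁
  exact (hlift j (by omega)).isCompactOperator_sub (hlift (j + 1) hin)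
    ⟨(hx j).le, le_rfl⟩ ⟨le_rfl, (hx (j + 1)).le⟩

/-- Every projection in the corona algebra of `C([0,1]) ⊗ K` admits a projection-valued
local lifting: if `f : [0,1] → B(H)` is strongly continuous, self-adjoint valued with
`0 ≤ f t ≤ 1`, and `t ↦ f t - f t ^ 2` is norm continuous and compact valued, then there
is a partition `0 = x₀ < x₁ < ⋯ < x_{n+1} = 1` and strongly continuous projection-valued
maps `fᵢ` on `[xᵢ, xᵢ₊₁]` with `f - fᵢ` norm continuous and compact valued on
`[xᵢ, xᵢ₊₁]`, and `fᵢ(xᵢ) - fᵢ₋₁(xᵢ)` compact for `i = 1, …, n`. -/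
theorem projection_local_lifting {H : Type*} [NormedAddCommGroup H]
    [InnerProductSpace ℂ H] [CompleteSpace H]
    (f : ℝ → H →L[ℂ] H)
    (hsc : ∀ v : H, ContinuousOn (fun t => f t v) (Icc (0:ℝ) 1))
    (hsa : ∀ t ∈ Icc (0:ℝ) 1, IsSelfAdjoint (f t))
    (hpos : ∀ t ∈ Icc (0:ℝ) 1, (f t).IsPositive ∧ (1 - f t).IsPositive)
    (hnc : ContinuousOn (fun t => f t - f t * f t) (Icc (0:ℝ) 1))
    (hK : ∀ t ∈ Icc (0:ℝ) 1, IsCompactOperator (⇑(f t - f t * f t))) :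
    ∃ (n : ℕ) (x : ℕ → ℝ) (g : ℕ → ℝ → H →L[ℂ] H),
      x 0 = 0 ∧ x (n + 1) = 1 ∧ (∀ i ≤ n, x i < x (i + 1)) ∧
      (∀ i ≤ n, ∀ v : H, ContinuousOn (fun t => g i t v) (Icc (x i) (x (i + 1)))) ∧
      (∀ i ≤ n, ∀ t ∈ Icc (x i) (x (i + 1)), IsProjection (g i t)) ∧
      (∀ i ≤ n, ContinuousOn (fun t => f t - g i t) (Icc (x i) (x (i + 1)))) ∧
      (∀ i ≤ n, ∀ t ∈ Icc (x i) (x (i + 1)), IsCompactOperator (⇑(f t - g i t))) ∧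
      (∀ i, 1 ≤ i → i ≤ n → IsCompactOperator (⇑(g i (x i) - g (i - 1) (x i)))) :=
  projection_local_lifting_general f hsc hsa hnc hK
end

section
/- Let H be a separable complex Hilbert space, let p : [0,1] → B(H) be strongly continuous with each p(t) a nonzero projection, let f : [0,1] → H be norm continuous with f(t) ∈ range p(t) for every t, and let ε > 0. Then there exists a norm continuous g : [0,1] → H such that g(t) ∈ range p(t), ‖g(t) − f(t)‖ < ε, and g(t) ≠ 0 for every t ∈ [0,1]. (Every continuous vector field of a nowhere-vanishing continuous field of Hilbert spaces over a space of dimension at most one can be uniformly approximated by a nonvanishing continuous vector field.) -/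
open ContinuousLinearMap Module

open Set Topology

/-!
Near each point `s`, a unit vector `w` with `p s w ≠ 0` gives a section `t ↦ p t w` that is nonzero
on a closed interval around `s`, and finitely many such intervals cover `[0,1]`. The section is made
nonzero on one interval at a time by adding `d • e`, where `e` is the local section and `d` a small
scalar function. On the new interval `g + d • e ≠ 0` as soon as `⟪e, g⟫ / ‖e‖² + d ≠ 0`, which can be
arranged because a `C¹` curve in `ℂ` misses points arbitrarily close to `0` (real dimension `1 < 2`);
on the intervals already treated `g` is bounded away from `0`, and `d` is chosen below that bound.
-/

theorem exists_contDiff_near_on_Icc {a b : ℝ} {α : ℝ → ℂ} (hα : ContinuousOn α (Icc a b))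
    {δ : ℝ} (hδ : 0 < δ) :
    ∃ β : ℝ → ℂ, ContDiff ℝ 1 β ∧ ∀ t ∈ Icc a b, ‖β t - α t‖ < δ := by
  obtain ⟨P, hP⟩ := exists_polynomial_near_of_continuousOn a b (fun t => (α t).re)
    (Complex.continuous_re.comp_continuousOn hα) (δ / 2) (half_pos hδ)
  obtain ⟨Q, hQ⟩ := exists_polynomial_near_of_continuousOn a b (fun t => (α t).im)
    (Complex.continuous_im.comp_continuousOn hα) (δ / 2) (half_pos hδ)
  refine ⟨fun t => ((P.eval t : ℝ) : ℂ) + ((Q.eval t : ℝ) : ℂ) * Complex.I, ?_, fun t ht => ?_⟩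
  · have hP' := Complex.ofRealCLM.contDiff.comp (P.contDiff_aeval 1)
    have hQ' := Complex.ofRealCLM.contDiff.comp (Q.contDiff_aeval 1)
    simpa using hP'.add (hQ'.mul contDiff_const)
  · calc _ ≤ |P.eval t - (α t).re| + |Q.eval t - (α t).im| := by
          simpa using Complex.norm_le_abs_re_add_abs_im
            (((P.eval t : ℝ) : ℂ) + ((Q.eval t : ℝ) : ℂ) * Complex.I - α t)
      _ < δ / 2 + δ / 2 := add_lt_add (hP t ht) (hQ t ht)
      _ = δ := add_halves δ

theorem exists_small_add_ne_zero_on_Icc {a b : ℝ} {α : ℝ → ℂ} (hα : ContinuousOn α (Icc a b))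
    {δ : ℝ} (hδ : 0 < δ) :
    ∃ d : ℝ → ℂ, Continuous d ∧ (∀ t, ‖d t‖ < δ) ∧ ∀ t ∈ Icc a b, α t + d t ≠ 0 := by
  rcases lt_or_ge b a with hba | hab
  · exact ⟨0, continuous_const, by simpa using hδ,
      fun t ht => absurd (ht.1.trans ht.2) (not_le.2 hba)⟩
  obtain ⟨β, hβ, hβα⟩ := exists_contDiff_near_on_Icc hα (half_pos hδ)
  obtain ⟨z, hzβ, hz⟩ := (hβ.dense_compl_range_of_finrank_lt_finrank (by simp)).exists_mem_open
    (Metric.isOpen_ball (x := 0)) (Metric.nonempty_ball.2 (half_pos hδ))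
  let π : ℝ → ℝ := fun t => projIcc a b hab t
  have hπ : Continuous π := continuous_subtype_val.comp continuous_projIcc
  refine ⟨fun t => β (π t) - z - α (π t), ?_, fun t => ?_, fun t ht => ?_⟩
  · exact ((hβ.continuous.comp hπ).sub continuous_const).sub
      (hα.comp_continuous hπ fun t => Subtype.mem _)
  · calc _ = ‖β (π t) - α (π t) - z‖ := by rw [sub_right_comm]
      _ ≤ ‖β (π t) - α (π t)‖ + ‖z‖ := norm_sub_le _ _
      _ < δ / 2 + δ / 2 := add_lt_add (hβα _ (Subtype.mem _)) (by simpa using hz)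
      _ = δ := add_halves δ
  · have hπt : π t = t := by simp [π, projIcc_of_mem hab ht]
    show α t + (β (π t) - z - α (π t)) ≠ 0
    rw [hπt, add_sub_cancel, sub_ne_zero]
    exact fun h => hzβ ⟨t, h⟩

section

variable {H : Type*} [NormedAddCommGroup H] [InnerProductSpace ℂ H]

def IsSection (V : ℝ → Submodule ℂ H) (g : ℝ → H) : Prop :=
  Continuous g ∧ ∀ t, g t ∈ V t

theorem exists_small_add_smul_ne_zero_on_Icc {a b : ℝ} {g e : ℝ → H}
    (hg : ContinuousOn g (Icc a b)) (he : ContinuousOn e (Icc a b))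
    (he0 : ∀ t ∈ Icc a b, e t ≠ 0) {δ : ℝ} (hδ : 0 < δ) :
    ∃ d : ℝ → ℂ, Continuous d ∧ (∀ t, ‖d t‖ < δ) ∧ ∀ t ∈ Icc a b, g t + d t • e t ≠ 0 := by
  let α : ℝ → ℂ := fun t => inner ℂ (e t) (g t) / (‖e t‖ : ℂ) ^ 2
  have hnorm : ∀ t ∈ Icc a b, (‖e t‖ : ℂ) ^ 2 ≠ 0 := fun t ht => by simp [he0 t ht]
  have hα : ContinuousOn α (Icc a b) :=
    (he.inner hg).div ((Complex.continuous_ofReal.comp_continuousOn he.norm).pow 2) hnorm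
  obtain ⟨d, hd, hdδ, hαd⟩ := exists_small_add_ne_zero_on_Icc hα hδ
  refine ⟨d, hd, hdδ, fun t ht h => hαd t ht ?_⟩
  have hinner : inner ℂ (e t) (g t + d t • e t) = (α t + d t) * (‖e t‖ : ℂ) ^ 2 := by
    rw [inner_add_right, inner_smul_right, inner_self_eq_norm_sq_to_K, add_mul,
      div_mul_cancel₀ _ (hnorm t ht)]
    rfl
  rw [h, inner_zero_right] at hinner
  exact (mul_eq_zero.1 hinner.symm).resolve_right (hnorm t ht)

theorem IsCompact.exists_pos_le_norm {X E : Type*} [TopologicalSpace X] [NormedAddCommGroup E]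
    {K : Set X} (hK : IsCompact K) {g : X → E} (hg : ContinuousOn g K)
    (hg0 : ∀ x ∈ K, g x ≠ 0) : ∃ m > 0, ∀ x ∈ K, m ≤ ‖g x‖ := by
  rcases K.eq_empty_or_nonempty with rfl | hne
  · exact ⟨1, one_pos, fun x hx => hx.elim⟩
  obtain ⟨x₀, hx₀, hmin⟩ := hK.exists_isMinOn hne hg.norm
  exact ⟨‖g x₀‖, norm_pos_iff.2 (hg0 x₀ hx₀), hmin⟩

theorem exists_section_near_ne_zero_on_union_Icc {V : ℝ → Submodule ℂ H} {C : Set ℝ}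
    (hC : IsCompact C) {g e : ℝ → H} (hg : IsSection V g) (hgC : ∀ t ∈ C, g t ≠ 0)
    (he : IsSection V e) (he1 : ∀ t, ‖e t‖ ≤ 1) {a b : ℝ} (he0 : ∀ t ∈ Icc a b, e t ≠ 0)
    {η : ℝ} (hη : 0 < η) :
    ∃ g' : ℝ → H, IsSection V g' ∧ (∀ t, ‖g' t - g t‖ < η) ∧ ∀ t ∈ C ∪ Icc a b, g' t ≠ 0 := by
  obtain ⟨m, hm, hgm⟩ := hC.exists_pos_le_norm hg.1.continuousOn hgC
  obtain ⟨d, hd, hdδ, hde⟩ := exists_small_add_smul_ne_zero_on_Icc hg.1.continuousOn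
    he.1.continuousOn he0 (lt_min hη hm)
  have hsmall : ∀ t, ‖d t • e t‖ < min η m := fun t => by
    rw [norm_smul]
    exact (mul_le_of_le_one_right (norm_nonneg _) (he1 t)).trans_lt (hdδ t)
  refine ⟨fun t => g t + d t • e t, ⟨hg.1.add (hd.smul he.1), fun t => ?_⟩, fun t => ?_, ?_⟩
  · exact add_mem (hg.2 t) (Submodule.smul_mem _ _ (he.2 t))
  · simpa using (hsmall t).trans_le (min_le_left _ _)
  · rintro t (ht | ht)
    · intro h
      have := (hsmall t).trans_le ((min_le_right _ _).trans (hgm t ht))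
      rw [eq_neg_of_add_eq_zero_left h, norm_neg] at this
      exact this.false
    · exact hde t ht

theorem exists_section_near_ne_zero_on_biUnion_Icc {V : ℝ → Submodule ℂ H} {ι : Type*}
    (s : Finset ι) (a b : ι → ℝ) (e : ι → ℝ → H)
    (he : ∀ i ∈ s, IsSection V (e i) ∧ (∀ t, ‖e i t‖ ≤ 1) ∧ ∀ t ∈ Icc (a i) (b i), e i t ≠ 0)
    {f : ℝ → H} (hf : IsSection V f) {η : ℝ} (hη : 0 < η) :
    ∃ g : ℝ → H, IsSection V g ∧ (∀ t, ‖g t - f t‖ < η) ∧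
      ∀ t ∈ ⋃ i ∈ s, Icc (a i) (b i), g t ≠ 0 := by
  classical
  induction s using Finset.induction_on generalizing η with
  | empty => exact ⟨f, hf, fun t => by simpa using hη, by simp⟩
  | insert j s _ ih =>
    obtain ⟨g, hg, hgf, hg0⟩ := ih (fun i hi => he i (Finset.mem_insert_of_mem hi)) (half_pos hη)
    obtain ⟨hej, hej1, hej0⟩ := he j (Finset.mem_insert_self j s)
    obtain ⟨g', hg', hg'g, hg'0⟩ := exists_section_near_ne_zero_on_union_Icc
      (s.isCompact_biUnion fun i _ => isCompact_Icc) hg hg0 hej hej1 hej0 (half_pos hη)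
    refine ⟨g', hg', fun t => ?_, fun t ht => hg'0 t ?_⟩
    · calc ‖g' t - f t‖ ≤ ‖g' t - g t‖ + ‖g t - f t‖ := norm_sub_le_norm_sub_add_norm_sub _ _ _
        _ < η / 2 + η / 2 := add_lt_add (hg'g t) (hgf t)
        _ = η := add_halves η
    · rw [Finset.set_biUnion_insert] at ht
      exact ht.symm

theorem exists_Icc_mem_nhds_section_ne_zero {P : ℝ → H →L[ℂ] H}
    (hP : ∀ v, Continuous fun t => P t v) (hP1 : ∀ t v, ‖P t v‖ ≤ ‖v‖) {s : ℝ} (hs : P s ≠ 0) :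
    ∃ a b : ℝ, Icc a b ∈ 𝓝 s ∧ ∃ e : ℝ → H,
      IsSection (fun t => LinearMap.range (P t : H →ₗ[ℂ] H)) e ∧ (∀ t, ‖e t‖ ≤ 1) ∧
        ∀ t ∈ Icc a b, e t ≠ 0 := by
  obtain ⟨v, hv⟩ : ∃ v, P s v ≠ 0 := by
    by_contra! h
    exact hs (ContinuousLinearMap.ext h)
  have hv0 : v ≠ 0 := fun h => hv (by rw [h, map_zero])
  let w : H := (‖v‖⁻¹ : ℂ) • v
  have hw : ‖w‖ = 1 := norm_smul_inv_norm hv0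
  have hPw : P s w ≠ 0 := by simp [w, hv, hv0]
  obtain ⟨a, b, -, hab, hsub⟩ :=
    exists_Icc_mem_subset_of_mem_nhds ((hP w).continuousAt.eventually_ne hPw)
  exact ⟨a, b, hab, fun t => P t w, ⟨hP w, fun t => LinearMap.mem_range_self _ w⟩,
    fun t => (hP1 t w).trans hw.le, hsub⟩

end

theorem IsProjection.norm_apply_le {H : Type*} [NormedAddCommGroup H] [InnerProductSpace ℂ H]
    [CompleteSpace H] {p : H →L[ℂ] H} (hp : IsProjection p) (v : H) : ‖p v‖ ≤ ‖v‖ :=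
  (p.le_opNorm v).trans <|
    mul_le_of_le_one_left (norm_nonneg v) (IsStarProjection.norm_le p ⟨hp.2, hp.1⟩)

theorem exists_nonvanishing_section_general {H : Type*} [NormedAddCommGroup H]
    [InnerProductSpace ℂ H] [CompleteSpace H]
    (p : Set.Icc (0:ℝ) 1 → H →L[ℂ] H)
    (hsc : ∀ v : H, Continuous fun t => p t v)
    (hproj : ∀ t, IsProjection (p t))
    (hne : ∀ t, p t ≠ 0)
    (f : Set.Icc (0:ℝ) 1 → H)
    (hf : Continuous f)
    (hfmem : ∀ t, f t ∈ LinearMap.range (p t : H →ₗ[ℂ] H))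
    (ε : ℝ) (hε : 0 < ε) :
    ∃ g : Set.Icc (0:ℝ) 1 → H,
      Continuous g ∧
      (∀ t, g t ∈ LinearMap.range (p t : H →ₗ[ℂ] H)) ∧
      (∀ t, ‖g t - f t‖ < ε) ∧
      (∀ t, g t ≠ 0) := by
  let π : ℝ → Icc (0:ℝ) 1 := projIcc 0 1 zero_le_one
  choose a b hab e he using fun s : ℝ =>
    exists_Icc_mem_nhds_section_ne_zero (P := fun t => p (π t))
      (fun v => (hsc v).comp continuous_projIcc) (fun t => (hproj (π t)).norm_apply_le) (hne (π s))
  obtain ⟨T, -, hT⟩ := isCompact_Icc.elim_nhds_subcover (fun s => Icc (a s) (b s)) fun s _ => hab s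
  obtain ⟨g, ⟨hg, hgp⟩, hgf, hg0⟩ := exists_section_near_ne_zero_on_biUnion_Icc T a b e
    (fun s _ => he s) (f := fun t => f (π t)) ⟨hf.comp continuous_projIcc, fun t => hfmem (π t)⟩ hε
  refine ⟨fun t => g t, hg.comp continuous_subtype_val, fun t => ?_, fun t => ?_,
    fun t => hg0 t (hT t.2)⟩
  · simpa [π] using hgp t
  · simpa [π] using hgf t

/-- Every continuous vector field of a nowhere-vanishing continuous field of Hilbert
spaces over `[0,1]` can be uniformly approximated by a nonvanishing continuous vector
field. -/
theorem exists_nonvanishing_section {H : Type*} [NormedAddCommGroup H]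
    [InnerProductSpace ℂ H] [CompleteSpace H] [TopologicalSpace.SeparableSpace H]
    (p : Set.Icc (0:ℝ) 1 → H →L[ℂ] H)
    (hsc : ∀ v : H, Continuous fun t => p t v)
    (hproj : ∀ t, IsProjection (p t))
    (hne : ∀ t, p t ≠ 0)
    (f : Set.Icc (0:ℝ) 1 → H)
    (hf : Continuous f)
    (hfmem : ∀ t, f t ∈ LinearMap.range (p t : H →ₗ[ℂ] H))
    (ε : ℝ) (hε : 0 < ε) :
    ∃ g : Set.Icc (0:ℝ) 1 → H,
      Continuous g ∧
      (∀ t, g t ∈ LinearMap.range (p t : H →ₗ[ℂ] H)) ∧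
      (∀ t, ‖g t - f t‖ < ε) ∧
      (∀ t, g t ≠ 0) :=
  exists_nonvanishing_section_general p hsc hproj hne f hf hfmem ε hε
end

section
/- Let H be an infinite-dimensional separable complex Hilbert space and let a ∈ [0,1]. Then there exists a strongly continuous map p : [0,1] → B(H) such that each p(t) is a projection, p(a) = 0, and range p(t) is infinite-dimensional for every t ≠ a. -/
/-!
A Hilbert basis of `H` is indexed by an infinite `ι ≃ ι × ℕ`, so `H ≃ ℓ²(ι, ℓ²(ℕ))`.
On `ℓ²(ℕ)` the unit vectors `w r = √(1 - r²) (rⁿ)ₙ`, `|r| < 1`, move continuously in norm and,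
as `|r| → 1`, converge weakly to `0 = w r` for `|r| ≥ 1`. Hence the rank-one projections onto
`ℂ ∙ w r` form a strongly continuous family on `ℝ`, and so does their diagonal amplification to
`ℓ²(ι, ℓ²(ℕ))`: for a uniformly bounded family of operators, strong continuity only has to be
checked on a set with dense span. The amplification has infinite rank for `|r| < 1` and vanishes
at `r = 1`; conjugating back to `H` and reparametrising by `r = 1 - |t - a|` gives the field.
-/

open ContinuousLinearMap Module

open Filter Topology Submodule
open scoped lp

universe u

namespace ContinuousLinearMap

variable {X 𝕜 E F : Type*} [TopologicalSpace X] [NontriviallyNormedField 𝕜]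
  [NormedAddCommGroup E] [NormedSpace 𝕜 E] [NormedAddCommGroup F] [NormedSpace 𝕜 F]

theorem isClosed_setOf_continuous_apply {T : X → E →L[𝕜] F} {C : ℝ}
    (hT : ∀ x, ‖T x‖ ≤ C) : IsClosed {v | Continuous fun x => T x v} := by
  have hequi : Equicontinuous fun x => ⇑(T x) :=
    ((NormedSpace.equicontinuous_TFAE T).out 5 1).mp (show ∃ C, ∀ x, ‖T x‖ ≤ C from ⟨C, hT⟩)
  simp_rw [continuous_iff_continuousAt, Set.ofPred_forall]
  exact isClosed_iInter fun x₀ => hequi.isClosed_setOfPred_tendsto (T x₀).continuous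

theorem continuous_apply_of_dense_span {T : X → E →L[𝕜] F} {C : ℝ}
    (hT : ∀ x, ‖T x‖ ≤ C) {s : Set E} (hs : Dense (span 𝕜 s : Set E))
    (hTs : ∀ v ∈ s, Continuous fun x => T x v) (v : E) : Continuous fun x => T x v := by
  let S : Submodule 𝕜 E :=
    { carrier := {v | Continuous fun x => T x v}
      add_mem' := fun hu hw => by
        simp only [Set.mem_ofPred_eq, map_add]
        exact hu.add hw
      zero_mem' := by simpa only [Set.mem_ofPred_eq, map_zero] using continuous_const
      smul_mem' := fun c _ hu => by
        simp only [Set.mem_ofPred_eq, map_smul]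
        exact hu.const_smul c }
  exact closure_minimal (span_le.mpr hTs : (span 𝕜 s : Set E) ⊆ S)
    (isClosed_setOf_continuous_apply hT) (hs v)

end ContinuousLinearMap

theorem continuousAt_of_continuousAt_inner_of_continuousAt_norm {X 𝕜 E : Type*}
    [TopologicalSpace X] [RCLike 𝕜] [NormedAddCommGroup E] [InnerProductSpace 𝕜 E]
    {f : X → E} {x₀ : X} (hinner : ContinuousAt (fun x => (inner 𝕜 (f x) (f x₀) : 𝕜)) x₀)
    (hnorm : ContinuousAt (fun x => ‖f x‖) x₀) : ContinuousAt f x₀ := by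
  have hsq : Tendsto (fun x => ‖f x - f x₀‖ ^ 2) (𝓝 x₀) (𝓝 0) := by
    have h : ContinuousAt
        (fun x => ‖f x‖ ^ 2 - 2 * RCLike.re (inner 𝕜 (f x) (f x₀)) + ‖f x₀‖ ^ 2) x₀ :=
      ((hnorm.pow 2).sub ((RCLike.continuous_re.continuousAt.comp hinner).const_mul 2)).add
        continuousAt_const
    convert h.tendsto using 2 with x
    · exact norm_sub_sq (𝕜 := 𝕜) _ _
    · rw [inner_self_eq_norm_sq]
      ring
  rw [ContinuousAt, tendsto_iff_norm_sub_tendsto_zero]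
  have h := (Real.continuous_sqrt.tendsto 0).comp hsq
  simpa only [Function.comp_def, Real.sqrt_sq (norm_nonneg _), Real.sqrt_zero] using h

namespace lp

theorem dense_span_range_single {ι 𝕜 : Type*} {E : ι → Type*} [DecidableEq ι] [NormedRing 𝕜]
    [∀ i, NormedAddCommGroup (E i)] [∀ i, Module 𝕜 (E i)] [∀ i, IsBoundedSMul 𝕜 (E i)]
    {p : ENNReal} [Fact (1 ≤ p)] (hp : p ≠ ⊤) :
    Dense (span 𝕜 (⋃ i, Set.range (lp.single (E := E) p i)) : Set (lp E p)) := fun x =>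
  mem_closure_of_tendsto (lp.hasSum_single hp x) <| Eventually.of_forall fun _ =>
    sum_mem fun i _ => subset_span (Set.mem_iUnion_of_mem i (Set.mem_range_self _))

section NormedSpace

variable {ι 𝕜 : Type*} {E F : ι → Type*} [NontriviallyNormedField 𝕜]
  [∀ i, NormedAddCommGroup (E i)] [∀ i, NormedSpace 𝕜 (E i)]
  [∀ i, NormedAddCommGroup (F i)] [∀ i, NormedSpace 𝕜 (F i)]
  {p : ENNReal} [Fact (1 ≤ p)] [DecidableEq ι] {K : ℝ}

theorem mapCLM_single (T : ∀ i, E i →L[𝕜] F i) (hK : 0 ≤ K) (hTK : ∀ i, ‖T i‖ ≤ K)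
    (i : ι) (v : E i) : mapCLM p T hK hTK (lp.single p i v) = lp.single p i (T i v) := by
  ext j
  rw [mapCLM_apply_coe]
  rcases eq_or_ne j i with rfl | hji
  · simp only [lp.single_apply_self]
  · simp only [lp.single_apply_ne p i _ hji, map_zero]

theorem continuous_mapCLM_apply {X : Type*} [TopologicalSpace X] (hp : p ≠ ⊤)
    {T : X → ∀ i, E i →L[𝕜] F i} (hK : 0 ≤ K) (hTK : ∀ x i, ‖T x i‖ ≤ K)
    (hT : ∀ i v, Continuous fun x => T x i v) (f : lp E p) :
    Continuous fun x => mapCLM p (T x) hK (hTK x) f := by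
  refine ContinuousLinearMap.continuous_apply_of_dense_span
    (fun x => norm_mapCLM_le p (T x) hK (hTK x)) (dense_span_range_single (𝕜 := 𝕜) hp) ?_ f
  simp only [Set.mem_iUnion, Set.mem_range]
  rintro _ ⟨i, v, rfl⟩
  simp only [mapCLM_single]
  exact (isometry_single i).continuous.comp (hT i v)

end NormedSpace

section InnerProductSpace

variable {ι 𝕜 : Type*} {E : ι → Type*} [RCLike 𝕜]
  [∀ i, NormedAddCommGroup (E i)] [∀ i, InnerProductSpace 𝕜 (E i)]
  {T : ∀ i, E i →L[𝕜] E i} {K : ℝ}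

theorem isStarProjection_mapCLM [∀ i, CompleteSpace (E i)] (hT : ∀ i, IsStarProjection (T i))
    (hK : 0 ≤ K) (hTK : ∀ i, ‖T i‖ ≤ K) : IsStarProjection (mapCLM 2 T hK hTK) where
  isIdempotentElem := by
    ext f i
    change T i (T i (f i)) = T i (f i)
    exact DFunLike.congr_fun (hT i).isIdempotentElem.eq (f i)
  isSelfAdjoint := by
    rw [ContinuousLinearMap.isSelfAdjoint_iff_isSymmetric]
    intro f g
    simp only [ContinuousLinearMap.coe_coe, inner_eq_tsum, mapCLM_apply_coe]
    exact tsum_congr fun i =>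
      ContinuousLinearMap.isSelfAdjoint_iff_isSymmetric.mp (hT i).isSelfAdjoint (f i) (g i)

theorem not_finiteDimensional_range_mapCLM [DecidableEq ι] [Infinite ι] (hT : ∀ i, T i ≠ 0)
    (hK : 0 ≤ K) (hTK : ∀ i, ‖T i‖ ≤ K) :
    ¬ FiniteDimensional 𝕜 (LinearMap.range (mapCLM 2 T hK hTK : lp E 2 →ₗ[𝕜] lp E 2)) := by
  choose v hv using fun i => DFunLike.ne_iff.mp (hT i)
  set R := LinearMap.range (mapCLM 2 T hK hTK : lp E 2 →ₗ[𝕜] lp E 2)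
  have hmem : ∀ i, lp.single 2 i (T i (v i)) ∈ R := fun i =>
    ⟨lp.single 2 i (v i), mapCLM_single T hK hTK i (v i)⟩
  have hli : LinearIndependent 𝕜 fun i => lp.single 2 i (T i (v i)) := by
    refine linearIndependent_of_ne_zero_of_inner_eq_zero (fun i => ?_) fun i j hij => ?_
    · rw [← norm_ne_zero_iff, lp.norm_single (by norm_num), norm_ne_zero_iff]
      exact hv i
    · dsimp only
      rw [inner_single_left, lp.single_apply_ne 2 j _ hij, inner_zero_right]
  intro hR
  exact Module.Finite.not_linearIndependent_of_infinite (R := 𝕜) (fun i => (⟨_, hmem i⟩ : R))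
    (LinearIndependent.of_comp R.subtype hli)

end InnerProductSpace

end lp

namespace HilbertBasis

variable {ι κ 𝕜 E : Type*} [RCLike 𝕜] [NormedAddCommGroup E] [InnerProductSpace 𝕜 E]

protected noncomputable def reindex [CompleteSpace E] (b : HilbertBasis ι 𝕜 E) (e : ι ≃ κ) :
    HilbertBasis κ 𝕜 E :=
  HilbertBasis.mk (b.orthonormal.comp e.symm e.symm.injective) <| by
    rw [e.symm.surjective.range_comp]
    exact b.dense_span.ge

theorem orthonormal_lp_single [DecidableEq ι] (b : HilbertBasis κ 𝕜 E) :
    Orthonormal 𝕜 fun ik : ι × κ => lp.single (E := fun _ : ι => E) 2 ik.1 (b ik.2) := by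
  classical
  rw [orthonormal_iff_ite]
  rintro ⟨i, k⟩ ⟨j, l⟩
  rw [lp.inner_single_left]
  rcases eq_or_ne i j with rfl | hij
  · simp only [lp.single_apply_self, Prod.mk.injEq, true_and]
    exact orthonormal_iff_ite.mp b.orthonormal k l
  · simp [hij]

protected noncomputable def lp [DecidableEq ι] [CompleteSpace E] (b : HilbertBasis κ 𝕜 E) :
    HilbertBasis (ι × κ) 𝕜 (lp (fun _ : ι => E) 2) :=
  HilbertBasis.mkOfOrthogonalEqBot (orthonormal_lp_single b) <| by
    refine (Submodule.eq_bot_iff _).mpr fun x hx => lp.ext <| funext fun i => ?_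
    refine b.repr.injective <| lp.ext <| funext fun k => ?_
    rw [Submodule.mem_orthogonal] at hx
    simpa [b.repr_apply_apply, lp.inner_single_left] using
      hx _ (subset_span ⟨(i, k), rfl⟩)

end HilbertBasis

theorem exists_linearIsometryEquiv_lp_l2 {𝕜 : Type*} {E : Type u} [RCLike 𝕜]
    [NormedAddCommGroup E] [InnerProductSpace 𝕜 E] [CompleteSpace E]
    (hE : ¬ FiniteDimensional 𝕜 E) :
    ∃ ι : Type u, Infinite ι ∧ Nonempty (E ≃ₗᵢ[𝕜] lp (fun _ : ι => ℓ²(ℕ, 𝕜)) 2) := by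
  classical
  obtain ⟨w, b, -⟩ := exists_hilbertBasis 𝕜 E
  have hw : Infinite w := by
    by_contra hfin
    have : Fintype w := @Fintype.ofFinite _ (not_infinite_iff_finite.mp hfin)
    exact hE (Module.Finite.of_basis b.toOrthonormalBasis.toBasis)
  obtain ⟨e⟩ : Nonempty (w × ℕ ≃ w) := by
    rw [← Cardinal.eq]
    simp only [Cardinal.mk_prod, Cardinal.lift_uzero, Cardinal.mk_nat, Cardinal.lift_aleph0]
    exact Cardinal.mul_eq_left (Cardinal.infinite_iff.mp hw) (Cardinal.infinite_iff.mp hw)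
      Cardinal.aleph0_ne_zero
  exact ⟨w, hw, ⟨b.repr.trans (((default : HilbertBasis ℕ 𝕜 ℓ²(ℕ, 𝕜)).lp).reindex e).repr.symm⟩⟩

theorem LinearIsometryEquiv.finiteDimensional_range_conjStarAlgEquiv_iff {𝕜 E F : Type*}
    [RCLike 𝕜] [NormedAddCommGroup E] [InnerProductSpace 𝕜 E] [CompleteSpace E]
    [NormedAddCommGroup F] [InnerProductSpace 𝕜 F] [CompleteSpace F]
    (e : E ≃ₗᵢ[𝕜] F) (T : E →L[𝕜] E) :
    FiniteDimensional 𝕜 (LinearMap.range (e.conjStarAlgEquiv T : F →ₗ[𝕜] F)) ↔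
      FiniteDimensional 𝕜 (LinearMap.range (T : E →ₗ[𝕜] E)) := by
  have h : LinearMap.range (e.conjStarAlgEquiv T : F →ₗ[𝕜] F) =
      (LinearMap.range (T : E →ₗ[𝕜] E)).map (e.toLinearEquiv : E →ₗ[𝕜] F) := by
    change LinearMap.range ((e.toLinearEquiv : E →ₗ[𝕜] F) ∘ₗ
      ((T : E →ₗ[𝕜] E) ∘ₗ (e.symm.toLinearEquiv : F →ₗ[𝕜] E))) = _
    rw [LinearMap.range_comp, LinearMap.range_comp_of_range_eq_top _ (LinearEquiv.range _)]
  rw [h]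
  exact (Module.Finite.equiv_iff (Submodule.equivMapOfInjective _ e.injective _)).symm

-- `Real.sqrt` vanishes on negative reals, so `geomSeq r = 0` for `|r| ≥ 1` and every coordinate
-- `r ↦ geomSeq r n` is continuous on all of `ℝ`.
noncomputable def geomSeq (r : ℝ) (n : ℕ) : ℂ := ((√(1 - r ^ 2) * r ^ n : ℝ) : ℂ)

theorem geomSeq_eq_zero {r : ℝ} (hr : 1 ≤ |r|) : geomSeq r = 0 := by
  have h : 1 - r ^ 2 ≤ 0 := by nlinarith [sq_abs r]
  funext n
  simp [geomSeq, Real.sqrt_eq_zero'.mpr h]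

theorem hasSum_norm_geomSeq_sq {r : ℝ} (hr : |r| < 1) :
    HasSum (fun n => ‖geomSeq r n‖ ^ 2) 1 := by
  have hr2 : r ^ 2 < 1 := by nlinarith [sq_abs r, abs_nonneg r]
  have h := (hasSum_geometric_of_lt_one (sq_nonneg r) hr2).mul_left (1 - r ^ 2)
  rw [mul_inv_cancel₀ (sub_pos.mpr hr2).ne'] at h
  have e : (fun n => ‖geomSeq r n‖ ^ 2) = fun n => (1 - r ^ 2) * (r ^ 2) ^ n := by
    funext n
    rw [geomSeq, Complex.norm_real, Real.norm_eq_abs, sq_abs, mul_pow,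
      Real.sq_sqrt (by linarith), ← pow_mul, ← pow_mul, mul_comm n]
  rwa [e]

theorem memℓp_geomSeq (r : ℝ) : Memℓp (geomSeq r) 2 := by
  rcases lt_or_ge |r| 1 with hr | hr
  · apply memℓp_gen
    simpa using (hasSum_norm_geomSeq_sq hr).summable
  · rw [geomSeq_eq_zero hr]
    exact zero_memℓp

noncomputable def geomVec (r : ℝ) : ℓ²(ℕ, ℂ) := ⟨geomSeq r, memℓp_geomSeq r⟩

theorem geomVec_eq_zero {r : ℝ} (hr : 1 ≤ |r|) : geomVec r = 0 :=
  lp.ext (geomSeq_eq_zero hr)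

theorem norm_geomVec {r : ℝ} (hr : |r| < 1) : ‖geomVec r‖ = 1 := by
  have h := lp.norm_rpow_eq_tsum (p := 2) (by simp) (geomVec r)
  simp only [ENNReal.toReal_ofNat, Real.rpow_two] at h
  change ‖geomVec r‖ ^ 2 = ∑' n, ‖geomSeq r n‖ ^ 2 at h
  rw [(hasSum_norm_geomSeq_sq hr).tsum_eq] at h
  exact (pow_eq_one_iff_of_nonneg (norm_nonneg _) two_ne_zero).mp h

theorem norm_geomVec_le_one (r : ℝ) : ‖geomVec r‖ ≤ 1 := by
  rcases lt_or_ge |r| 1 with hr | hr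
  · exact (norm_geomVec hr).le
  · simp [geomVec_eq_zero hr]

theorem continuous_geomSeq (n : ℕ) : Continuous fun r => geomSeq r n := by
  unfold geomSeq
  fun_prop

theorem continuous_inner_geomVec (y : ℓ²(ℕ, ℂ)) :
    Continuous fun r => inner ℂ (geomVec r) y := by
  classical
  refine ContinuousLinearMap.continuous_apply_of_dense_span (T := fun r => innerSL ℂ (geomVec r))
    (fun r => (innerSL_apply_norm ℂ _).trans_le (norm_geomVec_le_one r))
    (lp.dense_span_range_single ENNReal.ofNat_ne_top) ?_ y
  simp only [Set.mem_iUnion, Set.mem_range]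
  rintro _ ⟨n, c, rfl⟩
  simp only [innerSL_apply_apply, lp.inner_single_right]
  exact (continuous_geomSeq n).inner continuous_const

theorem continuousAt_geomVec {r₀ : ℝ} (hr₀ : |r₀| < 1) : ContinuousAt geomVec r₀ := by
  refine continuousAt_of_continuousAt_inner_of_continuousAt_norm (𝕜 := ℂ)
    (continuous_inner_geomVec _).continuousAt ((continuousAt_const (y := (1 : ℝ))).congr ?_)
  filter_upwards [(isOpen_lt continuous_abs continuous_const).mem_nhds hr₀] with r hr
  exact (norm_geomVec hr).symm

theorem starProjection_span_geomVec_apply (r : ℝ) (y : ℓ²(ℕ, ℂ)) :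
    (ℂ ∙ geomVec r).starProjection y = inner ℂ (geomVec r) y • geomVec r := by
  rcases lt_or_ge |r| 1 with hr | hr
  · exact starProjection_unit_singleton ℂ (norm_geomVec hr) y
  · simp [geomVec_eq_zero hr]

theorem continuous_starProjection_span_geomVec_apply (y : ℓ²(ℕ, ℂ)) :
    Continuous fun r => (ℂ ∙ geomVec r).starProjection y := by
  simp only [starProjection_span_geomVec_apply]
  refine continuous_iff_continuousAt.mpr fun r₀ => ?_
  rcases lt_or_ge |r₀| 1 with hr₀ | hr₀
  · exact (continuous_inner_geomVec y).continuousAt.smul (continuousAt_geomVec hr₀)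
  · have hinner : Tendsto (fun r => inner ℂ (geomVec r) y) (𝓝 r₀) (𝓝 0) := by
      simpa [geomVec_eq_zero hr₀] using (continuous_inner_geomVec y).tendsto r₀
    rw [ContinuousAt, geomVec_eq_zero hr₀, smul_zero]
    refine squeeze_zero_norm (fun r => ?_) (tendsto_norm_zero.comp hinner)
    simpa [norm_smul] using mul_le_of_le_one_right (norm_nonneg _) (norm_geomVec_le_one r)

section GeomBlockProj

variable (ι : Type*)

noncomputable def geomBlockProj (r : ℝ) :
    lp (fun _ : ι => ℓ²(ℕ, ℂ)) 2 →L[ℂ] lp (fun _ : ι => ℓ²(ℕ, ℂ)) 2 :=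
  lp.mapCLM 2 (fun _ => (ℂ ∙ geomVec r).starProjection) zero_le_one
    fun _ => starProjection_norm_le _

theorem continuous_geomBlockProj_apply (f : lp (fun _ : ι => ℓ²(ℕ, ℂ)) 2) :
    Continuous fun r => geomBlockProj ι r f := by
  classical
  exact lp.continuous_mapCLM_apply ENNReal.ofNat_ne_top zero_le_one _
    (fun _ _ => continuous_starProjection_span_geomVec_apply _) f

theorem isStarProjection_geomBlockProj (r : ℝ) : IsStarProjection (geomBlockProj ι r) :=
  lp.isStarProjection_mapCLM (fun _ => isStarProjection_starProjection) _ _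

theorem geomBlockProj_eq_zero {r : ℝ} (hr : 1 ≤ |r|) : geomBlockProj ι r = 0 := by
  ext f i
  simp [geomBlockProj, geomVec_eq_zero hr]

theorem not_finiteDimensional_range_geomBlockProj [Infinite ι] {r : ℝ} (hr : |r| < 1) :
    ¬ FiniteDimensional ℂ (LinearMap.range
      (geomBlockProj ι r : lp (fun _ : ι => ℓ²(ℕ, ℂ)) 2 →ₗ[ℂ] lp (fun _ : ι => ℓ²(ℕ, ℂ)) 2)) := by
  classical
  refine lp.not_finiteDimensional_range_mapCLM (fun _ hP => ?_) _ _
  have h : geomVec r = 0 := by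
    rw [← (ℂ ∙ geomVec r).starProjection_eq_self_iff.mpr (mem_span_singleton_self _), hP]
    rfl
  simpa [h] using norm_geomVec hr

end GeomBlockProj

theorem abs_one_sub_abs_sub_lt_one {t a : ℝ} (ht : t ∈ Set.Icc (0 : ℝ) 1)
    (ha : a ∈ Set.Icc (0 : ℝ) 1) (hta : t ≠ a) : |(1 - |t - a|)| < 1 := by
  have h0 : 0 < |t - a| := abs_pos.mpr (sub_ne_zero.mpr hta)
  have h1 : |t - a| ≤ 1 := abs_sub_le_iff.mpr ⟨by linarith [ht.2, ha.1], by linarith [ht.1, ha.2]⟩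
  rw [abs_lt]
  constructor <;> linarith

theorem exists_infinite_rank_field_vanishing_at_point_general {H : Type*} [NormedAddCommGroup H]
    [InnerProductSpace ℂ H] [CompleteSpace H]
    (hinf : ¬ FiniteDimensional ℂ H)
    (a : ℝ) (ha : a ∈ Set.Icc (0:ℝ) 1) :
    ∃ p : Set.Icc (0:ℝ) 1 → H →L[ℂ] H,
      (∀ v : H, Continuous fun t => p t v) ∧
      (∀ t, IsProjection (p t)) ∧
      p ⟨a, ha⟩ = 0 ∧
      (∀ t : Set.Icc (0:ℝ) 1, (t : ℝ) ≠ a →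
        ¬ FiniteDimensional ℂ (LinearMap.range (p t : H →ₗ[ℂ] H))) := by
  obtain ⟨ι, _, ⟨U⟩⟩ := exists_linearIsometryEquiv_lp_l2 hinf
  refine ⟨fun t => U.symm.conjStarAlgEquiv (geomBlockProj ι (1 - |(t : ℝ) - a|)),
    fun v => ?_, fun t => ?_, ?_, fun t ht => ?_⟩
  · exact U.symm.continuous.comp
      ((continuous_geomBlockProj_apply ι (U v)).comp (by fun_prop))
  · have h := (isStarProjection_geomBlockProj ι (1 - |(t : ℝ) - a|)).map U.symm.conjStarAlgEquiv
    exact ⟨h.isSelfAdjoint, h.isIdempotentElem⟩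
  · simp only [sub_self, abs_zero, sub_zero]
    rw [geomBlockProj_eq_zero ι (by simp), map_zero]
  · rw [U.symm.finiteDimensional_range_conjStarAlgEquiv_iff]
    exact not_finiteDimensional_range_geomBlockProj ι (abs_one_sub_abs_sub_lt_one t.2 ha ht)

/-- There is a strongly continuous projection-valued map on `[0,1]` vanishing exactly at
a prescribed point `a` and of infinite rank elsewhere. -/
theorem exists_infinite_rank_field_vanishing_at_point {H : Type*} [NormedAddCommGroup H]
    [InnerProductSpace ℂ H] [CompleteSpace H] [TopologicalSpace.SeparableSpace H]
    (hinf : ¬ FiniteDimensional ℂ H)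
    (a : ℝ) (ha : a ∈ Set.Icc (0:ℝ) 1) :
    ∃ p : Set.Icc (0:ℝ) 1 → H →L[ℂ] H,
      (∀ v : H, Continuous fun t => p t v) ∧
      (∀ t, IsProjection (p t)) ∧
      p ⟨a, ha⟩ = 0 ∧
      (∀ t : Set.Icc (0:ℝ) 1, (t : ℝ) ≠ a →
        ¬ FiniteDimensional ℂ (LinearMap.range (p t : H →ₗ[ℂ] H))) :=
  exists_infinite_rank_field_vanishing_at_point_general hinf a ha
end
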